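/- arXiv:2402.06181 — 9 statements merged into one kernel-verified Lean document; each statement's English description precedes it below -/
import Mathlib

section
/- Let f : ℝ^d × ℝ → ℝ be L₁-smooth in x (i.e., ∇ₓf(·;t) is L₁-Lipschitz for each t) and G₂-Lipschitz in t (i.e., |f(x;s) − f(x;t)| ≤ G₂|s−t| for all x). Consider the gradient descent iterates x_{k+1} = x_k − (1/L₁)∇ₓf(x_k; t_k) with t_k = kh. Then for T = (f(x₀;t₀) − f₀*)/(2h) iterations (where f₀* = min_x f(x;t₀) and the optimal value is Lipschitz in t as in the previous lemma), the average gradient norm satisfies (1/T) Σ_{k=0}^{T−1} ‖∇ₓf(x_k;t_k)‖ ≤ 2√(L₁(1+G₂)h). -/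
/-!
Each gradient step with step size `1/L₁` decreases `f(·; t_k)` by at least
`‖∇ₓf(x_k; t_k)‖² / (2L₁)` (descent lemma), while moving from `t_k` to `t_{k+1}` raises the
objective by at most `G₂ h`. Telescoping over `T` steps and bounding
`f(x_T; t_T) ≥ f(x_T; 0) - G₂ T h ≥ f₀* - G₂ T h` gives `∑ ‖∇ₓf(x_k; t_k)‖² ≤ 4 L₁ (1 + G₂) h T`
for the chosen `T`; Cauchy–Schwarz turns this into the bound on the mean gradient norm.
-/

open Finset RealInnerProductSpace

theorem Finset.sum_div_card_le_sqrt_sum_sq_div_card {ι : Type*} (s : Finset ι) (a : ι → ℝ) :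
    (∑ i ∈ s, a i) / #s ≤ √((∑ i ∈ s, a i ^ 2) / #s) :=
  (le_abs_self _).trans (Real.abs_le_sqrt sum_div_card_sq_le_sum_sq_div_card)

section DescentLemma

variable {E : Type*} [NormedAddCommGroup E] [InnerProductSpace ℝ E] {F : E → ℝ} {G : E → E} {L : ℝ}

theorem HasGradientAt.hasDerivAt_comp_add_smul [CompleteSpace E] {G' x v : E} {s : ℝ}
    (hF : HasGradientAt F G' (x + s • v)) :
    HasDerivAt (fun r : ℝ => F (x + r • v)) ⟪G', v⟫ s := by
  have hline : HasDerivAt (fun r : ℝ => x + r • v) v s := by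
    simpa using ((hasDerivAt_id s).smul_const v).const_add x
  simpa [Function.comp_def] using hF.hasFDerivAt.comp_hasDerivAt s hline

theorem inner_sub_le_of_lipschitz (hlip : ∀ a b, ‖G a - G b‖ ≤ L * ‖a - b‖)
    (x v : E) {s : ℝ} (hs : 0 ≤ s) :
    ⟪G (x + s • v) - G x, v⟫ ≤ L * s * ‖v‖ ^ 2 :=
  calc ⟪G (x + s • v) - G x, v⟫ ≤ ‖G (x + s • v) - G x‖ * ‖v‖ := real_inner_le_norm _ _
    _ ≤ L * ‖s • v‖ * ‖v‖ := by
        gcongr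
        simpa using hlip (x + s • v) x
    _ = L * s * ‖v‖ ^ 2 := by rw [norm_smul, Real.norm_of_nonneg hs]; ring

theorem le_add_inner_add_sq_of_lipschitz_gradient [CompleteSpace E]
    (hgrad : ∀ z, HasGradientAt F (G z) z)
    (hlip : ∀ a b, ‖G a - G b‖ ≤ L * ‖a - b‖) (x y : E) :
    F y ≤ F x + ⟪G x, y - x⟫ + L / 2 * ‖y - x‖ ^ 2 := by
  set v := y - x
  let φ : ℝ → ℝ := fun r => F (x + r • v) - r * ⟪G x, v⟫ - L / 2 * r ^ 2 * ‖v‖ ^ 2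
  have hφ : ∀ r, HasDerivAt φ (⟪G (x + r • v) - G x, v⟫ - L * r * ‖v‖ ^ 2) r := by
    intro r
    have hsq := ((hasDerivAt_pow 2 r).const_mul (L / 2)).mul_const (‖v‖ ^ 2)
    refine (((hgrad _).hasDerivAt_comp_add_smul.sub
      ((hasDerivAt_id r).mul_const ⟪G x, v⟫)).sub hsq).congr_deriv ?_
    rw [inner_sub_left]
    push_cast
    ring
  have hanti : AntitoneOn φ (Set.Icc 0 1) :=
    antitoneOn_of_hasDerivWithinAt_nonpos (convex_Icc 0 1)
      (fun r _ => (hφ r).continuousAt.continuousWithinAt)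
      (fun r _ => (hφ r).hasDerivWithinAt)
      (fun r hr => by
        rw [interior_Icc] at hr
        exact sub_nonpos.2 (inner_sub_le_of_lipschitz hlip x v hr.1.le))
  have h01 := hanti (Set.left_mem_Icc.2 zero_le_one) (Set.right_mem_Icc.2 zero_le_one) zero_le_one
  simp only [φ, one_smul, zero_smul, add_zero, v, add_sub_cancel] at h01
  linarith

theorem le_sub_sq_norm_of_gradient_step [CompleteSpace E]
    (hgrad : ∀ z, HasGradientAt F (G z) z)
    (hlip : ∀ a b, ‖G a - G b‖ ≤ L * ‖a - b‖) (x : E) :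
    F (x - (1 / L) • G x) ≤ F x - 1 / (2 * L) * ‖G x‖ ^ 2 := by
  rcases eq_or_ne L 0 with rfl | hL
  · simp
  have hdesc := le_add_inner_add_sq_of_lipschitz_gradient hgrad hlip x (x - (1 / L) • G x)
  rw [sub_sub_cancel_left, inner_neg_right, real_inner_smul_right, real_inner_self_eq_norm_sq,
    norm_neg, norm_smul, Real.norm_eq_abs, mul_pow, sq_abs] at hdesc
  convert hdesc using 1
  field_simp
  ring

end DescentLemma

theorem sum_sq_norm_gradient_le_of_time_varying_descent {E : Type*} [NormedAddCommGroup E]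
    [InnerProductSpace ℝ E] [CompleteSpace E] {f : E → ℝ → ℝ} {g : E → ℝ → E} {L G₂ h : ℝ}
    (hh : 0 ≤ h) (hgrad : ∀ t x, HasGradientAt (fun y => f y t) (g x t) x)
    (hlipg : ∀ t x y, ‖g x t - g y t‖ ≤ L * ‖x - y‖)
    (hlipt : ∀ x s t, |f x s - f x t| ≤ G₂ * |s - t|)
    {x : ℕ → E} (hupd : ∀ k : ℕ, x (k + 1) = x k - (1 / L) • g (x k) (k * h)) (n : ℕ) :
    1 / (2 * L) * ∑ k ∈ range n, ‖g (x k) (k * h)‖ ^ 2 ≤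
      f (x 0) 0 - f (x n) (n * h) + G₂ * h * n := by
  induction n with
  | zero => simp
  | succ n ih =>
    have hstep :
        f (x (n + 1)) (n * h) ≤ f (x n) (n * h) - 1 / (2 * L) * ‖g (x n) (n * h)‖ ^ 2 := by
      rw [hupd n]
      exact le_sub_sq_norm_of_gradient_step (hgrad _) (hlipg _) (x n)
    have hdrift : f (x (n + 1)) ((n + 1 : ℕ) * h) ≤ f (x (n + 1)) (n * h) + G₂ * h := by
      have := (abs_le.1 (hlipt (x (n + 1)) ((n + 1 : ℕ) * h) (n * h))).2
      rw [Nat.cast_succ, add_one_mul, add_sub_cancel_left, abs_of_nonneg hh] at this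
      rw [Nat.cast_succ, add_one_mul]
      linarith
    rw [sum_range_succ, mul_add]
    push_cast at hdrift ⊢
    linarith

theorem stmt_1_general {d : ℕ} (f : EuclideanSpace ℝ (Fin d) → ℝ → ℝ)
    (g : EuclideanSpace ℝ (Fin d) → ℝ → EuclideanSpace ℝ (Fin d))
    (L₁ G₂ h : ℝ) (hL₁ : 0 < L₁) (hh : 0 < h)
    (hgrad : ∀ (t : ℝ) (x : EuclideanSpace ℝ (Fin d)),
      HasGradientAt (fun y => f y t) (g x t) x)
    (hlipg : ∀ (t : ℝ) (x y : EuclideanSpace ℝ (Fin d)),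
      ‖g x t - g y t‖ ≤ L₁ * ‖x - y‖)
    (hlipt : ∀ (x : EuclideanSpace ℝ (Fin d)) (s t : ℝ),
      |f x s - f x t| ≤ G₂ * |s - t|)
    (fstar : ℝ → ℝ)
    (hopt : ∀ (t : ℝ) (x : EuclideanSpace ℝ (Fin d)), fstar t ≤ f x t)
    (x : ℕ → EuclideanSpace ℝ (Fin d))
    (hupd : ∀ k : ℕ, x (k + 1) = x k - (1 / L₁) • g (x k) (k * h))
    (T : ℕ) (hTpos : 0 < T)
    (hT : (T : ℝ) = (f (x 0) 0 - fstar 0) / (2 * h)) :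
    (1 / (T : ℝ)) * ∑ k ∈ Finset.range T, ‖g (x k) (k * h)‖ ≤
      2 * Real.sqrt (L₁ * (1 + G₂) * h) := by
  have hsum := sum_sq_norm_gradient_le_of_time_varying_descent hh.le hgrad hlipg hlipt hupd T
  have hlow : fstar 0 - G₂ * (T * h) ≤ f (x T) (T * h) := by
    have := (abs_le.1 (hlipt (x T) (T * h) 0)).1
    rw [sub_zero, abs_of_nonneg (by positivity)] at this
    linarith [hopt 0 (x T)]
  have hgap : f (x 0) 0 - fstar 0 = 2 * h * T := by
    rw [hT]
    field_simp
  have hTr : (0 : ℝ) < T := Nat.cast_pos.2 hTpos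
  have hmean :
      (∑ k ∈ range T, ‖g (x k) (k * h)‖ ^ 2) / #(range T) ≤ 4 * (L₁ * (1 + G₂) * h) := by
    have hdecrease : f (x 0) 0 - f (x T) (T * h) + G₂ * h * T ≤ 2 * (1 + G₂) * h * T := by
      linarith
    rw [one_div, inv_mul_le_iff₀ (by positivity)] at hsum
    rw [card_range, div_le_iff₀ hTr]
    calc ∑ k ∈ range T, ‖g (x k) (k * h)‖ ^ 2 ≤ 2 * L₁ * (2 * (1 + G₂) * h * T) :=
          hsum.trans (mul_le_mul_of_nonneg_left hdecrease (by positivity))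
      _ = 4 * (L₁ * (1 + G₂) * h) * T := by ring
  calc (1 / (T : ℝ)) * ∑ k ∈ range T, ‖g (x k) (k * h)‖
      = (∑ k ∈ range T, ‖g (x k) (k * h)‖) / #(range T) := by
        rw [card_range, one_div_mul_eq_div]
    _ ≤ √((∑ k ∈ range T, ‖g (x k) (k * h)‖ ^ 2) / #(range T)) :=
        sum_div_card_le_sqrt_sum_sq_div_card _ _
    _ ≤ √(4 * (L₁ * (1 + G₂) * h)) := Real.sqrt_le_sqrt hmean
    _ = 2 * √(L₁ * (1 + G₂) * h) := by
        rw [Real.sqrt_mul zero_le_four, show (4 : ℝ) = 2 ^ 2 by norm_num,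
          Real.sqrt_sq zero_le_two]

/-- Theorem 1: average gradient norm bound for time-varying gradient descent. -/
theorem stmt_1 {d : ℕ} (f : EuclideanSpace ℝ (Fin d) → ℝ → ℝ)
    (g : EuclideanSpace ℝ (Fin d) → ℝ → EuclideanSpace ℝ (Fin d))
    (L₁ G₂ h : ℝ) (hL₁ : 0 < L₁) (hh : 0 < h) (hG₂ : 0 ≤ G₂)
    (hgrad : ∀ (t : ℝ) (x : EuclideanSpace ℝ (Fin d)),
      HasGradientAt (fun y => f y t) (g x t) x)
    (hlipg : ∀ (t : ℝ) (x y : EuclideanSpace ℝ (Fin d)),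
      ‖g x t - g y t‖ ≤ L₁ * ‖x - y‖)
    (hlipt : ∀ (x : EuclideanSpace ℝ (Fin d)) (s t : ℝ),
      |f x s - f x t| ≤ G₂ * |s - t|)
    (fstar : ℝ → ℝ)
    (hopt : ∀ (t : ℝ) (x : EuclideanSpace ℝ (Fin d)), fstar t ≤ f x t)
    (hattained : ∀ t : ℝ, ∃ x, f x t = fstar t)
    (hlipstar : ∀ s t : ℝ, |fstar s - fstar t| ≤ G₂ * |s - t|)
    (x : ℕ → EuclideanSpace ℝ (Fin d))
    (hupd : ∀ k : ℕ, x (k + 1) = x k - (1 / L₁) • g (x k) (k * h))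
    (T : ℕ) (hTpos : 0 < T)
    (hT : (T : ℝ) = (f (x 0) 0 - fstar 0) / (2 * h)) :
    (1 / (T : ℝ)) * ∑ k ∈ Finset.range T, ‖g (x k) (k * h)‖ ≤
      2 * Real.sqrt (L₁ * (1 + G₂) * h) :=
  stmt_1_general f g L₁ G₂ h hL₁ hh hgrad hlipg hlipt fstar hopt x hupd T hTpos hT
end

section
/- Suppose f is L₁-smooth in x, G₂-Lipschitz in t, the optimal value f(x*(t);t) is G₂-Lipschitz in t, and β = 1/L₁. If at iteration T̄ the TVGD iterate x_{T̄} satisfies ‖∇ₓf(x_{T̄};t_{T̄})‖ ≤ 2√(L₁(1+G₂)h), then every subsequent iterate x_k (k ≥ T̄) either satisfies ‖∇ₓf(x_k;t_k)‖ ≤ 2√(L₁(1+G₂)h), or there exists l < k such that ‖∇ₓf(x_l;t_l)‖ ≤ 2√(L₁(1+G₂)h) and (f(x_k;t_k) − f_k*) < (f(x_l;t_l) − f_l*) + 2G₂h − (1/(2L₁))‖∇ₓf(x_l;t_l)‖². -/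
/-!
Write `eₖ = f(xₖ; tₖ) - f*(tₖ)` and `∇ₖ = ∇ₓf(xₖ; tₖ)`. The descent lemma and the `G₂`-Lipschitz
dependence of `f` and `f*` on time give `eₖ₊₁ ≤ eₖ + 2G₂h - ‖∇ₖ‖²/(2L₁)`, and the inequality is
strict as soon as `∇ₖ₊₁ ≠ 0`: a function with `L`-Lipschitz gradient lying below a quadratic model
of curvature `L` and slope `p` at `y` stays below it by `‖∇φ(y) - p‖²/(4L)` at `y` (test the two
quadratic bounds at `y + (∇φ(y) - p)/(2L)`). Applied to the gradient step and to the time shift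
`tₖ → tₖ₊₁`, this gains `‖∇ₖ₊₁‖²/(8L₁)`.

Then induct on `k`. If `∇ₖ₊₁` is large, either `∇ₖ` is small and `l = k` works, or `∇ₖ` is large
too, so `‖∇ₖ‖²/(2L₁) > 2(1 + G₂)h ≥ 2G₂h`, the gap does not grow, and the `l` found for `k` works.
-/

open scoped RealInnerProductSpace

section Smooth

variable {E : Type*} [NormedAddCommGroup E] [InnerProductSpace ℝ E] {φ : E → ℝ} {G : E → E}
  {L : ℝ}

theorem le_sub_norm_sub_sq_of_quadratic_bounds {y g p : E} {c : ℝ} (hL : 0 < L)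
    (hlow : ∀ u, φ y + ⟪g, u⟫ - L / 2 * ‖u‖ ^ 2 ≤ φ (y + u))
    (hup : ∀ u, φ (y + u) ≤ c + ⟪p, u⟫ + L / 2 * ‖u‖ ^ 2) :
    φ y ≤ c - ‖g - p‖ ^ 2 / (4 * L) := by
  set u := (1 / (2 * L)) • (g - p)
  have hinner : ⟪g, u⟫ - ⟪p, u⟫ = 2 * (‖g - p‖ ^ 2 / (4 * L)) := by
    rw [← inner_sub_left, real_inner_smul_right, real_inner_self_eq_norm_sq]
    field_simp
    ring
  have hquad : L / 2 * ‖u‖ ^ 2 = ‖g - p‖ ^ 2 / (4 * L) / 2 := by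
    rw [norm_smul, mul_pow, Real.norm_eq_abs, sq_abs]
    field_simp
    ring
  linarith [hlow u, hup u]

variable [CompleteSpace E]

theorem abs_sub_sub_inner_le_of_lipschitz_gradient (hφ : ∀ y, HasGradientAt φ (G y) y)
    (hG : ∀ y z, ‖G y - G z‖ ≤ L * ‖y - z‖) (x v : E) : |φ (x + v) - φ x - ⟪G x, v⟫| ≤ L / 2 * ‖v‖ ^ 2 := by
  have hderiv : ∀ s : ℝ, HasDerivAt (fun s : ℝ => φ (x + s • v) - φ x - s * ⟪G x, v⟫)
      (⟪G (x + s • v) - G x, v⟫) s := by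
    intro s
    have hline : HasDerivAt (fun s : ℝ => x + s • v) v s := by
      simpa using ((hasDerivAt_id s).smul_const v).const_add x
    have hcomp := (hφ (x + s • v)).hasFDerivAt.comp_hasDerivAt s hline
    simp only [InnerProductSpace.toDual_apply_apply] at hcomp
    rw [inner_sub_left]
    exact (hcomp.sub_const (φ x)).sub (by simpa using (hasDerivAt_id s).mul_const ⟪G x, v⟫)
  have hbound := image_norm_le_of_norm_deriv_right_le_deriv_boundary (a := 0) (b := 1)
    (B := fun s => L / 2 * s ^ 2 * ‖v‖ ^ 2) (B' := fun s => L * s * ‖v‖ ^ 2)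
    (fun s _ => (hderiv s).continuousAt.continuousWithinAt)
    (fun s _ => (hderiv s).hasDerivWithinAt) (by simp)
    (fun s => (((hasDerivAt_pow 2 s).const_mul (L / 2)).mul_const (‖v‖ ^ 2)).congr_deriv
      (by push_cast; ring))
    (fun s hs => by
      calc ‖⟪G (x + s • v) - G x, v⟫‖ ≤ ‖G (x + s • v) - G x‖ * ‖v‖ := norm_inner_le_norm _ _
        _ ≤ L * (s * ‖v‖) * ‖v‖ := by
          gcongr
          simpa [norm_smul, abs_of_nonneg hs.1] using hG (x + s • v) x
        _ = L * s * ‖v‖ ^ 2 := by ring)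
    (Set.right_mem_Icc.2 zero_le_one)
  simpa using hbound

theorem image_add_le_of_lipschitz_gradient (hφ : ∀ y, HasGradientAt φ (G y) y)
    (hG : ∀ y z, ‖G y - G z‖ ≤ L * ‖y - z‖) (x v : E) :
    φ (x + v) ≤ φ x + ⟪G x, v⟫ + L / 2 * ‖v‖ ^ 2 := by
  linarith [(abs_le.1 (abs_sub_sub_inner_le_of_lipschitz_gradient hφ hG x v)).2]

theorem le_image_add_of_lipschitz_gradient (hφ : ∀ y, HasGradientAt φ (G y) y)
    (hG : ∀ y z, ‖G y - G z‖ ≤ L * ‖y - z‖) (x v : E) :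
    φ x + ⟪G x, v⟫ - L / 2 * ‖v‖ ^ 2 ≤ φ (x + v) := by
  linarith [(abs_le.1 (abs_sub_sub_inner_le_of_lipschitz_gradient hφ hG x v)).1]

theorem le_add_sub_norm_sub_sq_of_le_add {ψ : E → ℝ} {H : E → E} {c : ℝ} (hL : 0 < L)
    (hφ : ∀ y, HasGradientAt φ (G y) y) (hG : ∀ y z, ‖G y - G z‖ ≤ L * ‖y - z‖)
    (hψ : ∀ y, HasGradientAt ψ (H y) y) (hH : ∀ y z, ‖H y - H z‖ ≤ L * ‖y - z‖)
    (hle : ∀ y, φ y ≤ ψ y + c) (y : E) :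
    φ y ≤ ψ y + c - ‖G y - H y‖ ^ 2 / (4 * L) :=
  le_sub_norm_sub_sq_of_quadratic_bounds hL (le_image_add_of_lipschitz_gradient hφ hG y)
    fun u => (hle (y + u)).trans (by linarith [image_add_le_of_lipschitz_gradient hψ hH y u])

theorem image_gradient_step_le (hL : 0 < L) (hφ : ∀ y, HasGradientAt φ (G y) y)
    (hG : ∀ y z, ‖G y - G z‖ ≤ L * ‖y - z‖) (x : E) :
    φ (x - (1 / L) • G x) ≤
      φ x - ‖G x‖ ^ 2 / (2 * L) - ‖G (x - (1 / L) • G x)‖ ^ 2 / (4 * L) := by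
  have hupper : ∀ u, φ (x - (1 / L) • G x + u) ≤
      φ x - ‖G x‖ ^ 2 / (2 * L) + ⟪0, u⟫ + L / 2 * ‖u‖ ^ 2 := by
    intro u
    have htaylor := image_add_le_of_lipschitz_gradient hφ hG x (u - (1 / L) • G x)
    have hmodel : ⟪G x, u - (1 / L) • G x⟫ + L / 2 * ‖u - (1 / L) • G x‖ ^ 2 =
        -(‖G x‖ ^ 2 / (2 * L)) + L / 2 * ‖u‖ ^ 2 := by
      rw [inner_sub_right, real_inner_smul_right, real_inner_self_eq_norm_sq, norm_sub_sq_real,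
        real_inner_smul_right, norm_smul, mul_pow, Real.norm_eq_abs, sq_abs, real_inner_comm]
      field_simp
      ring
    rw [inner_zero_left, show x - (1 / L) • G x + u = x + (u - (1 / L) • G x) by abel]
    linarith
  simpa using le_sub_norm_sub_sq_of_quadratic_bounds hL
    (le_image_add_of_lipschitz_gradient hφ hG _) hupper

end Smooth

section TimeVarying

variable {E : Type*} [NormedAddCommGroup E] [InnerProductSpace ℝ E] [CompleteSpace E]
  {f : E → ℝ → ℝ} {g : E → ℝ → E} {fstar : ℝ → ℝ} {L G₂ h : ℝ}

theorem gap_gradient_step_le (hL : 0 < L) (hh : 0 ≤ h)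
    (hgrad : ∀ t x, HasGradientAt (fun y => f y t) (g x t) x)
    (hlipg : ∀ t x y, ‖g x t - g y t‖ ≤ L * ‖x - y‖)
    (hlipt : ∀ x s t, |f x s - f x t| ≤ G₂ * |s - t|)
    (hlipstar : ∀ s t, |fstar s - fstar t| ≤ G₂ * |s - t|) (x : E) (t : ℝ) :
    f (x - (1 / L) • g x t) (t + h) - fstar (t + h) ≤
      f x t - fstar t + 2 * G₂ * h - ‖g x t‖ ^ 2 / (2 * L) -
        ‖g (x - (1 / L) • g x t) (t + h)‖ ^ 2 / (8 * L) := by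
  set x' := x - (1 / L) • g x t
  have hdescent := image_gradient_step_le hL (hgrad t) (hlipg t) x
  have hdt : |t + h - t| = h := by rw [add_sub_cancel_left, abs_of_nonneg hh]
  have htransfer := le_add_sub_norm_sub_sq_of_le_add (c := G₂ * h) hL (hgrad (t + h))
    (hlipg (t + h)) (hgrad t) (hlipg t)
    (fun y => by linarith [(abs_sub_le_iff.1 (hdt ▸ hlipt y (t + h) t)).1]) x'
  have hstar : fstar t - G₂ * h ≤ fstar (t + h) := by
    linarith [(abs_sub_le_iff.1 (hdt ▸ hlipstar (t + h) t)).2]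
  have hsq : ‖g x' (t + h)‖ ^ 2 ≤ 2 * (‖g x' t‖ ^ 2 + ‖g x' (t + h) - g x' t‖ ^ 2) :=
    (pow_le_pow_left₀ (norm_nonneg _) (norm_le_norm_add_norm_sub' _ (g x' t)) 2).trans add_sq_le
  have hsplit : ‖g x' (t + h)‖ ^ 2 / (8 * L) ≤
      ‖g x' t‖ ^ 2 / (4 * L) + ‖g x' (t + h) - g x' t‖ ^ 2 / (4 * L) := by
    rw [← add_div, div_le_div_iff₀ (by positivity) (by positivity)]
    nlinarith
  linarith

end TimeVarying

theorem stmt_3_general {d : ℕ} (f : EuclideanSpace ℝ (Fin d) → ℝ → ℝ)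
    (g : EuclideanSpace ℝ (Fin d) → ℝ → EuclideanSpace ℝ (Fin d))
    (L₁ G₂ h : ℝ) (hL₁ : 0 < L₁) (hh : 0 < h) (hG₂ : 0 ≤ G₂)
    (hgrad : ∀ (t : ℝ) (x : EuclideanSpace ℝ (Fin d)),
      HasGradientAt (fun y => f y t) (g x t) x)
    (hlipg : ∀ (t : ℝ) (x y : EuclideanSpace ℝ (Fin d)),
      ‖g x t - g y t‖ ≤ L₁ * ‖x - y‖)
    (hlipt : ∀ (x : EuclideanSpace ℝ (Fin d)) (s t : ℝ),
      |f x s - f x t| ≤ G₂ * |s - t|)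
    (fstar : ℝ → ℝ)
    (hlipstar : ∀ s t : ℝ, |fstar s - fstar t| ≤ G₂ * |s - t|)
    (x : ℕ → EuclideanSpace ℝ (Fin d))
    (hupd : ∀ k : ℕ, x (k + 1) = x k - (1 / L₁) • g (x k) (k * h))
    (Tbar : ℕ)
    (hTbar : ‖g (x Tbar) (Tbar * h)‖ ≤ 2 * Real.sqrt (L₁ * (1 + G₂) * h)) :
    ∀ k : ℕ, Tbar ≤ k →
      ‖g (x k) (k * h)‖ ≤ 2 * Real.sqrt (L₁ * (1 + G₂) * h) ∨
      ∃ l : ℕ, l < k ∧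
        ‖g (x l) (l * h)‖ ≤ 2 * Real.sqrt (L₁ * (1 + G₂) * h) ∧
        f (x k) (k * h) - fstar (k * h) <
          f (x l) (l * h) - fstar (l * h) + 2 * G₂ * h -
            (1 / (2 * L₁)) * ‖g (x l) (l * h)‖ ^ 2 := by
  set ε := 2 * Real.sqrt (L₁ * (1 + G₂) * h) with hε
  have hε_sq : ε ^ 2 = 4 * (L₁ * (1 + G₂) * h) := by
    rw [hε, mul_pow, Real.sq_sqrt (by positivity)]
    norm_num
  intro k hk
  induction k, hk using Nat.le_induction with
  | base => exact Or.inl hTbar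
  | succ k _ ih =>
    have hstep := gap_gradient_step_le hL₁ hh.le hgrad hlipg hlipt hlipstar (x k) (k * h)
    rw [← hupd k, show (k : ℝ) * h + h = ((k + 1 : ℕ) : ℝ) * h by push_cast; ring] at hstep
    refine or_iff_not_imp_left.2 fun hnext => ?_
    have hnext_pos : 0 < ‖g (x (k + 1)) ((k + 1 : ℕ) * h)‖ ^ 2 / (8 * L₁) := by
      have : 0 < ‖g (x (k + 1)) ((k + 1 : ℕ) * h)‖ := by
        linarith [not_le.1 hnext, show 0 ≤ ε by positivity]
      positivity
    by_cases hcur : ‖g (x k) (k * h)‖ ≤ ε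
    · exact ⟨k, k.lt_succ_self, hcur, by rw [one_div_mul_eq_div]; linarith⟩
    · obtain ⟨l, hlk, hl, hgap⟩ := ih.resolve_left hcur
      have hdrift : 2 * G₂ * h ≤ ‖g (x k) (k * h)‖ ^ 2 / (2 * L₁) := by
        have : ε ^ 2 ≤ ‖g (x k) (k * h)‖ ^ 2 :=
          pow_le_pow_left₀ (by positivity) (not_le.1 hcur).le 2
        rw [le_div_iff₀ (by positivity)]
        nlinarith
      exact ⟨l, by omega, hl, by linarith⟩

/-- Theorem 2: once TVGD reaches a 2√(L₁(1+G₂)h)-stationary point, every later iterate is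
either such a stationary point, or its optimality gap exceeds that at an earlier stationary
point by at most 2G₂h − (1/(2L₁))‖∇ₓf_l‖². -/
theorem stmt_3 {d : ℕ} (f : EuclideanSpace ℝ (Fin d) → ℝ → ℝ)
    (g : EuclideanSpace ℝ (Fin d) → ℝ → EuclideanSpace ℝ (Fin d))
    (L₁ G₂ h : ℝ) (hL₁ : 0 < L₁) (hh : 0 < h) (hG₂ : 0 ≤ G₂)
    (hgrad : ∀ (t : ℝ) (x : EuclideanSpace ℝ (Fin d)),
      HasGradientAt (fun y => f y t) (g x t) x)
    (hlipg : ∀ (t : ℝ) (x y : EuclideanSpace ℝ (Fin d)),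
      ‖g x t - g y t‖ ≤ L₁ * ‖x - y‖)
    (hlipt : ∀ (x : EuclideanSpace ℝ (Fin d)) (s t : ℝ),
      |f x s - f x t| ≤ G₂ * |s - t|)
    (fstar : ℝ → ℝ)
    (hopt : ∀ (t : ℝ) (x : EuclideanSpace ℝ (Fin d)), fstar t ≤ f x t)
    (hattained : ∀ t : ℝ, ∃ x, f x t = fstar t)
    (hlipstar : ∀ s t : ℝ, |fstar s - fstar t| ≤ G₂ * |s - t|)
    (x : ℕ → EuclideanSpace ℝ (Fin d))
    (hupd : ∀ k : ℕ, x (k + 1) = x k - (1 / L₁) • g (x k) (k * h))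
    (Tbar : ℕ)
    (hTbar : ‖g (x Tbar) (Tbar * h)‖ ≤ 2 * Real.sqrt (L₁ * (1 + G₂) * h)) :
    ∀ k : ℕ, Tbar ≤ k →
      ‖g (x k) (k * h)‖ ≤ 2 * Real.sqrt (L₁ * (1 + G₂) * h) ∨
      ∃ l : ℕ, l < k ∧
        ‖g (x l) (l * h)‖ ≤ 2 * Real.sqrt (L₁ * (1 + G₂) * h) ∧
        f (x k) (k * h) - fstar (k * h) <
          f (x l) (l * h) - fstar (l * h) + 2 * G₂ * h -
            (1 / (2 * L₁)) * ‖g (x l) (l * h)‖ ^ 2 :=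
  stmt_3_general f g L₁ G₂ h hL₁ hh hG₂ hgrad hlipg hlipt fstar hlipstar x hupd Tbar hTbar
end

section
/- Suppose f(·;t) is a μ-PL function for each t (i.e., (1/2)‖∇ₓf(x;t)‖² ≥ μ(f(x;t) − f*(t))), is L₁-smooth in x, and f(x;·) and the optimal value f*(·) are both G₂-Lipschitz in t. With stepsize β = 1/L₁ and ρ := 1 − μ/L₁ ∈ [0,1), the TVGD optimality gap satisfies for all k: f(x_k;t_k) − f_k* ≤ ρ^k (f(x₀;t₀) − f₀*) + 2G₂h(1 − ρ^k)/(1 − ρ). Consequently, limsup_{k→∞} (f_k − f_k*) ≤ 2G₂h/(1 − ρ). -/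
/-!
A gradient step with stepsize `1/L` decreases `f(·; t)` by `‖∇f‖² / (2L)` (descent lemma), which
by the PL inequality contracts the gap `f − f*` by `ρ = 1 − μ/L`. Moving from `t_k` to `t_{k+1}`
changes `f` and `f*` by at most `G₂ h` each, so the gap obeys `e_{k+1} ≤ ρ e_k + 2 G₂ h`; unrolling
this linear recurrence gives the bound, and letting `k → ∞` its limit.
-/

open Set Filter

section Smooth

variable {F : Type*} [NormedAddCommGroup F] [InnerProductSpace ℝ F] [CompleteSpace F]
  {f : F → ℝ} {g : F → F} {L : ℝ}

theorem le_add_inner_add_of_lipschitz_gradient (hgrad : ∀ x, HasGradientAt f (g x) x)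
    (hlip : ∀ x y, ‖g x - g y‖ ≤ L * ‖x - y‖) (x y : F) :
    f y ≤ f x + inner ℝ (g x) (y - x) + L / 2 * ‖y - x‖ ^ 2 := by
  set v := y - x
  have hline : ∀ τ : ℝ, HasDerivAt (fun τ : ℝ => f (x + τ • v)) (inner ℝ (g (x + τ • v)) v) τ := by
    intro τ
    have hpath : HasDerivAt (fun τ : ℝ => x + τ • v) v τ := by
      simpa using ((hasDerivAt_id τ).smul_const v).const_add x
    have := (hgrad (x + τ • v)).hasFDerivAt.comp_hasDerivAt τ hpath
    simp only [InnerProductSpace.toDual_apply_apply] at this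
    exact this
  have hquad : ∀ τ : ℝ, HasDerivAt (fun τ : ℝ => f x + τ * inner ℝ (g x) v + L / 2 * τ ^ 2 * ‖v‖ ^ 2)
      (inner ℝ (g x) v + L * τ * ‖v‖ ^ 2) τ := fun τ =>
    ((((hasDerivAt_id τ).mul_const (inner ℝ (g x) v)).const_add (f x)).add
      (((hasDerivAt_pow 2 τ).const_mul (L / 2)).mul_const (‖v‖ ^ 2))).congr_deriv (by ring)
  have hslope : ∀ τ ∈ Ico (0 : ℝ) 1,
      inner ℝ (g (x + τ • v)) v ≤ inner ℝ (g x) v + L * τ * ‖v‖ ^ 2 := by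
    intro τ hτ
    have hcs : inner ℝ (g (x + τ • v) - g x) v ≤ L * τ * ‖v‖ ^ 2 := calc
      inner ℝ (g (x + τ • v) - g x) v ≤ ‖g (x + τ • v) - g x‖ * ‖v‖ := real_inner_le_norm _ _
      _ ≤ L * ‖τ • v‖ * ‖v‖ := by
          gcongr
          simpa using hlip (x + τ • v) x
      _ = L * τ * ‖v‖ ^ 2 := by rw [norm_smul, Real.norm_of_nonneg hτ.1]; ring
    rw [inner_sub_left] at hcs
    linarith
  have := image_le_of_deriv_right_le_deriv_boundary
    (fun τ _ => (hline τ).continuousAt.continuousWithinAt)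
    (fun τ _ => (hline τ).hasDerivWithinAt) (by simp)
    (fun τ _ => (hquad τ).continuousAt.continuousWithinAt)
    (fun τ _ => (hquad τ).hasDerivWithinAt) hslope (right_mem_Icc.2 zero_le_one)
  simpa [v] using this

theorem sub_smul_gradient_le (hgrad : ∀ x, HasGradientAt f (g x) x)
    (hlip : ∀ x y, ‖g x - g y‖ ≤ L * ‖x - y‖) (hL : 0 < L) (x : F) :
    f (x - (1 / L) • g x) ≤ f x - 1 / (2 * L) * ‖g x‖ ^ 2 := by
  have h := le_add_inner_add_of_lipschitz_gradient hgrad hlip x (x - (1 / L) • g x)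
  rw [sub_sub_cancel_left, inner_neg_right, real_inner_smul_right, real_inner_self_eq_norm_sq,
    norm_neg, norm_smul, Real.norm_of_nonneg (by positivity)] at h
  convert h using 1
  field_simp
  ring

theorem sub_smul_gradient_sub_le_of_PL (hgrad : ∀ x, HasGradientAt f (g x) x)
    (hlip : ∀ x y, ‖g x - g y‖ ≤ L * ‖x - y‖) (hL : 0 < L) {μ m : ℝ} {x : F}
    (hPL : μ * (f x - m) ≤ 1 / 2 * ‖g x‖ ^ 2) :
    f (x - (1 / L) • g x) - m ≤ (1 - μ / L) * (f x - m) := by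
  have hstep := sub_smul_gradient_le hgrad hlip hL x
  have hPL' : μ / L * (f x - m) ≤ 1 / (2 * L) * ‖g x‖ ^ 2 := by
    calc μ / L * (f x - m) = 1 / L * (μ * (f x - m)) := by ring
      _ ≤ 1 / L * (1 / 2 * ‖g x‖ ^ 2) := by gcongr
      _ = 1 / (2 * L) * ‖g x‖ ^ 2 := by ring
  linarith

end Smooth

section Recurrence

variable {u : ℕ → ℝ} {ρ c : ℝ}

theorem le_pow_mul_add_geom_of_le_mul_add (hρ0 : 0 ≤ ρ) (hρ1 : ρ ≠ 1)
    (hu : ∀ k, u (k + 1) ≤ ρ * u k + c) (k : ℕ) :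
    u k ≤ ρ ^ k * u 0 + c * (1 - ρ ^ k) / (1 - ρ) := by
  induction k with
  | zero => simp
  | succ k ih =>
    have hρ1' : 1 - ρ ≠ 0 := sub_ne_zero.2 hρ1.symm
    calc u (k + 1) ≤ ρ * u k + c := hu k
      _ ≤ ρ * (ρ ^ k * u 0 + c * (1 - ρ ^ k) / (1 - ρ)) + c := by gcongr
      _ = ρ ^ (k + 1) * u 0 + c * (1 - ρ ^ (k + 1)) / (1 - ρ) := by field_simp; ring

theorem limsup_le_of_le_mul_add (hρ0 : 0 ≤ ρ) (hρ1 : ρ < 1) (hbdd : BddBelow (range u))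
    (hu : ∀ k, u (k + 1) ≤ ρ * u k + c) :
    limsup u atTop ≤ c / (1 - ρ) := by
  have hbound := le_pow_mul_add_geom_of_le_mul_add hρ0 hρ1.ne hu
  have htend : Tendsto (fun k => ρ ^ k * u 0 + c * (1 - ρ ^ k) / (1 - ρ)) atTop
      (nhds (c / (1 - ρ))) := by
    have hpow := tendsto_pow_atTop_nhds_zero_of_lt_one hρ0 hρ1
    simpa using ((hpow.mul_const (u 0)).add (((hpow.const_sub 1).const_mul c).div_const (1 - ρ)))
  calc limsup u atTop ≤ limsup (fun k => ρ ^ k * u 0 + c * (1 - ρ ^ k) / (1 - ρ)) atTop :=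
        limsup_le_limsup (Eventually.of_forall hbound) hbdd.isBoundedUnder_of_range.isCoboundedUnder_flip
          htend.isBoundedUnder_le
    _ = c / (1 - ρ) := htend.limsup_eq

end Recurrence

theorem stmt_4_general {d : ℕ} (f : EuclideanSpace ℝ (Fin d) → ℝ → ℝ)
    (g : EuclideanSpace ℝ (Fin d) → ℝ → EuclideanSpace ℝ (Fin d))
    (L₁ G₂ h μ : ℝ) (hL₁ : 0 < L₁) (hh : 0 < h)
    (hμ : 0 < μ) (hμL : μ ≤ L₁)
    (hgrad : ∀ (t : ℝ) (x : EuclideanSpace ℝ (Fin d)),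
      HasGradientAt (fun y => f y t) (g x t) x)
    (hlipg : ∀ (t : ℝ) (x y : EuclideanSpace ℝ (Fin d)),
      ‖g x t - g y t‖ ≤ L₁ * ‖x - y‖)
    (fstar : ℝ → ℝ)
    (hopt : ∀ (t : ℝ) (x : EuclideanSpace ℝ (Fin d)), fstar t ≤ f x t)
    (hPL : ∀ (x : EuclideanSpace ℝ (Fin d)) (t : ℝ),
      μ * (f x t - fstar t) ≤ (1 / 2) * ‖g x t‖ ^ 2)
    (hlipt : ∀ (x : EuclideanSpace ℝ (Fin d)) (s t : ℝ),
      |f x s - f x t| ≤ G₂ * |s - t|)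
    (hlipstar : ∀ s t : ℝ, |fstar s - fstar t| ≤ G₂ * |s - t|)
    (x : ℕ → EuclideanSpace ℝ (Fin d))
    (hupd : ∀ k : ℕ, x (k + 1) = x k - (1 / L₁) • g (x k) (k * h)) :
    (∀ k : ℕ, f (x k) (k * h) - fstar (k * h) ≤
        (1 - μ / L₁) ^ k * (f (x 0) 0 - fstar 0) +
          2 * G₂ * h * (1 - (1 - μ / L₁) ^ k) / (1 - (1 - μ / L₁))) ∧
    Filter.limsup (fun k : ℕ => f (x k) (k * h) - fstar (k * h)) Filter.atTop ≤
      2 * G₂ * h / (1 - (1 - μ / L₁)) := by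
  set u : ℕ → ℝ := fun k => f (x k) (k * h) - fstar (k * h)
  have hρ0 : 0 ≤ 1 - μ / L₁ := sub_nonneg.2 ((div_le_one hL₁).2 hμL)
  have hρ1 : 1 - μ / L₁ < 1 := sub_lt_self 1 (div_pos hμ hL₁)
  have hrec : ∀ k, u (k + 1) ≤ (1 - μ / L₁) * u k + 2 * G₂ * h := by
    intro k
    have hstep : f (x (k + 1)) (k * h) - fstar (k * h) ≤ (1 - μ / L₁) * u k := by
      rw [hupd k]
      exact sub_smul_gradient_sub_le_of_PL (hgrad _) (hlipg _) hL₁ (hPL _ _)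
    have hdt : |((k + 1 : ℕ) : ℝ) * h - k * h| = h := by
      rw [Nat.cast_succ, add_one_mul, add_sub_cancel_left, abs_of_pos hh]
    have hf := abs_le.1 (hdt ▸ hlipt (x (k + 1)) ((k + 1 : ℕ) * h) (k * h))
    have hfstar := abs_le.1 (hdt ▸ hlipstar ((k + 1 : ℕ) * h) (k * h))
    simp only [u]
    linarith [hf.2, hfstar.1]
  have hu0 : u 0 = f (x 0) 0 - fstar 0 := by simp [u]
  have hbdd : BddBelow (Set.range u) := ⟨0, by rintro _ ⟨k, rfl⟩; exact sub_nonneg.2 (hopt _ _)⟩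
  exact ⟨fun k => hu0 ▸ le_pow_mul_add_geom_of_le_mul_add hρ0 hρ1.ne hrec k,
    limsup_le_of_le_mul_add hρ0 hρ1 hbdd hrec⟩

/-- Theorem 3: linear convergence of the TVGD optimality gap to an O(h) error bound
for μ-PL objectives. -/
theorem stmt_4 {d : ℕ} (f : EuclideanSpace ℝ (Fin d) → ℝ → ℝ)
    (g : EuclideanSpace ℝ (Fin d) → ℝ → EuclideanSpace ℝ (Fin d))
    (L₁ G₂ h μ : ℝ) (hL₁ : 0 < L₁) (hh : 0 < h) (hG₂ : 0 ≤ G₂)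
    (hμ : 0 < μ) (hμL : μ ≤ L₁)
    (hgrad : ∀ (t : ℝ) (x : EuclideanSpace ℝ (Fin d)),
      HasGradientAt (fun y => f y t) (g x t) x)
    (hlipg : ∀ (t : ℝ) (x y : EuclideanSpace ℝ (Fin d)),
      ‖g x t - g y t‖ ≤ L₁ * ‖x - y‖)
    (fstar : ℝ → ℝ)
    (hopt : ∀ (t : ℝ) (x : EuclideanSpace ℝ (Fin d)), fstar t ≤ f x t)
    (hattained : ∀ t : ℝ, ∃ x, f x t = fstar t)
    (hPL : ∀ (x : EuclideanSpace ℝ (Fin d)) (t : ℝ),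
      μ * (f x t - fstar t) ≤ (1 / 2) * ‖g x t‖ ^ 2)
    (hlipt : ∀ (x : EuclideanSpace ℝ (Fin d)) (s t : ℝ),
      |f x s - f x t| ≤ G₂ * |s - t|)
    (hlipstar : ∀ s t : ℝ, |fstar s - fstar t| ≤ G₂ * |s - t|)
    (x : ℕ → EuclideanSpace ℝ (Fin d))
    (hupd : ∀ k : ℕ, x (k + 1) = x k - (1 / L₁) • g (x k) (k * h)) :
    (∀ k : ℕ, f (x k) (k * h) - fstar (k * h) ≤
        (1 - μ / L₁) ^ k * (f (x 0) 0 - fstar 0) +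
          2 * G₂ * h * (1 - (1 - μ / L₁) ^ k) / (1 - (1 - μ / L₁))) ∧
    Filter.limsup (fun k : ℕ => f (x k) (k * h) - fstar (k * h)) Filter.atTop ≤
      2 * G₂ * h / (1 - (1 - μ / L₁)) :=
  stmt_4_general f g L₁ G₂ h μ hL₁ hh hμ hμL hgrad hlipg fstar hopt hPL hlipt hlipstar x hupd
end

section
/- Let f₁ : ℝ^m → ℝ and f₂ : ℝ^d × ℝ → ℝ^m be differentiable, and define f(x;t) := f₁(f₂(x;t)). Suppose the Jacobian ∇ₓf₂(x;t) ∈ ℝ^{m×d} has full row rank with minimum singular value σ_min(x;t) > 0. Then |∇ₜf(x;t)| / ‖∇ₓf(x;t)‖ ≤ ‖∇ₜf₂(x;t)‖ / σ_min(x;t) whenever ∇ₓf(x;t) ≠ 0. -/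
theorem abs_inner_div_norm_le_div_of_mul_norm_le {F E : Type*}
    [SeminormedAddCommGroup F] [InnerProductSpace ℝ F] [SeminormedAddGroup E]
    {A : F → E} {g v : F} {σ : ℝ} (hσ : 0 < σ) (hA : σ * ‖g‖ ≤ ‖A g‖) :
    |(inner ℝ g v : ℝ)| / ‖A g‖ ≤ ‖v‖ / σ := by
  refine div_le_of_le_mul₀ (norm_nonneg _) (by positivity) ?_
  calc |(inner ℝ g v : ℝ)| ≤ ‖g‖ * ‖v‖ := abs_real_inner_le_norm g v
    _ = ‖v‖ / σ * (σ * ‖g‖) := by field_simp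
    _ ≤ ‖v‖ / σ * ‖A g‖ := by gcongr

theorem stmt_7_general {d m : ℕ}
    (g₁ : EuclideanSpace ℝ (Fin m))
    (J : EuclideanSpace ℝ (Fin d) →L[ℝ] EuclideanSpace ℝ (Fin m))
    (vt : EuclideanSpace ℝ (Fin m))
    (σmin : ℝ) (hσpos : 0 < σmin)
    (hσ : ∀ w : EuclideanSpace ℝ (Fin m),
      σmin * ‖w‖ ≤ ‖ContinuousLinearMap.adjoint J w‖) :
    |(inner ℝ g₁ vt : ℝ)| / ‖ContinuousLinearMap.adjoint J g₁‖ ≤ ‖vt‖ / σmin :=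
  abs_inner_div_norm_le_div_of_mul_norm_le hσpos (hσ g₁)

/-- Proposition 2: for f(x;t) = f₁(f₂(x;t)) with row-full-rank Jacobian of f₂ in x,
|∇ₜf| / ‖∇ₓf‖ ≤ ‖∇ₜf₂‖ / σ_min. -/
theorem stmt_7 {d m : ℕ}
    (f₁ : EuclideanSpace ℝ (Fin m) → ℝ)
    (f₂ : EuclideanSpace ℝ (Fin d) → ℝ → EuclideanSpace ℝ (Fin m))
    (x : EuclideanSpace ℝ (Fin d)) (t : ℝ)
    (g₁ : EuclideanSpace ℝ (Fin m))
    (hg₁ : HasGradientAt f₁ g₁ (f₂ x t))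
    (J : EuclideanSpace ℝ (Fin d) →L[ℝ] EuclideanSpace ℝ (Fin m))
    (hJ : HasFDerivAt (fun y => f₂ y t) J x)
    (vt : EuclideanSpace ℝ (Fin m))
    (hvt : HasDerivAt (fun s => f₂ x s) vt t)
    (σmin : ℝ) (hσpos : 0 < σmin)
    (hσ : ∀ w : EuclideanSpace ℝ (Fin m),
      σmin * ‖w‖ ≤ ‖ContinuousLinearMap.adjoint J w‖)
    (hne : ContinuousLinearMap.adjoint J g₁ ≠ 0) :
    |(inner ℝ g₁ vt : ℝ)| / ‖ContinuousLinearMap.adjoint J g₁‖ ≤ ‖vt‖ / σmin :=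
  stmt_7_general g₁ J vt σmin hσpos hσ
end

section
/- Let f be twice differentiable in x with m·I ⪯ ∇ₓₓf(x;t) ⪯ L₁·I and ‖∇_{tx}f(x;t)‖ ≤ L₂ for all x, t. Define the recentered function f̌(x;t) := f(x;t) − ∇ₜf(y;t)|_{y=x*(t)} integrated appropriately, so that ∇ₜf̌(x;t) = ∇ₜf(x;t) − ∇ₜf(y;t)|_{y=x*(t)} and ∇ₓf̌ = ∇ₓf. Then for all x ≠ x*(t), |∇ₜf̌(x;t)| / ‖∇ₓf̌(x;t)‖ ≤ L₂/m, i.e., |∇ₜf̌(x;t)| ≤ (L₂/m) ‖∇ₓf̌(x;t)‖. -/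
/-!
Strong monotonicity of `∇ₓf(·;t)` together with `∇ₓf(x*(t);t) = 0` gives the error bound
`m‖x - x*(t)‖ ≤ ‖∇ₓf(x;t)‖`, and the `L₂`-Lipschitz dependence of `∇ₜf` on `x` turns it into
the claimed bound.
-/

open RealInnerProductSpace

theorem mul_norm_le_norm_of_mul_norm_sq_le_inner {F : Type*} [NormedAddCommGroup F]
    [InnerProductSpace ℝ F] {m : ℝ} {u v : F} (h : m * ‖v‖ ^ 2 ≤ ⟪u, v⟫) :
    m * ‖v‖ ≤ ‖u‖ := by
  rcases (norm_nonneg v).eq_or_lt with hv | hv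
  · rw [← hv, mul_zero]
    exact norm_nonneg u
  · have hcs : m * ‖v‖ * ‖v‖ ≤ ‖u‖ * ‖v‖ := by
      linarith [real_inner_le_norm u v]
    exact le_of_mul_le_mul_right hcs hv

theorem stmt_10_general {d : ℕ}
    (gx : EuclideanSpace ℝ (Fin d) → ℝ → EuclideanSpace ℝ (Fin d))
    (gt : EuclideanSpace ℝ (Fin d) → ℝ → ℝ)
    (m L₂ : ℝ) (hm : 0 < m) (hL₂ : 0 ≤ L₂)
    (hsc : ∀ (t : ℝ) (x y : EuclideanSpace ℝ (Fin d)),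
      m * ‖x - y‖ ^ 2 ≤ (inner ℝ (gx x t - gx y t) (x - y) : ℝ))
    (htx : ∀ (t : ℝ) (x y : EuclideanSpace ℝ (Fin d)),
      |gt x t - gt y t| ≤ L₂ * ‖x - y‖)
    (xstar : ℝ → EuclideanSpace ℝ (Fin d))
    (hstat : ∀ t : ℝ, gx (xstar t) t = 0) :
    ∀ (x : EuclideanSpace ℝ (Fin d)) (t : ℝ), x ≠ xstar t →
      |gt x t - gt (xstar t) t| ≤ (L₂ / m) * ‖gx x t‖ := by
  intro x t _
  have herror : m * ‖x - xstar t‖ ≤ ‖gx x t‖ := by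
    simpa only [hstat t, sub_zero] using
      mul_norm_le_norm_of_mul_norm_sq_le_inner (hsc t x (xstar t))
  calc |gt x t - gt (xstar t) t| ≤ L₂ * ‖x - xstar t‖ := htx t x (xstar t)
    _ = L₂ / m * (m * ‖x - xstar t‖) := by field_simp
    _ ≤ L₂ / m * ‖gx x t‖ := by gcongr

/-- Part (b) of Proposition 1: for an m-strongly-convex objective with
‖∇_{tx}f‖ ≤ L₂, the recentered time derivative satisfies
|∇ₜf(x;t) − ∇ₜf(x*(t);t)| ≤ (L₂/m)‖∇ₓf(x;t)‖. -/
theorem stmt_10 {d : ℕ}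
    (f : EuclideanSpace ℝ (Fin d) → ℝ → ℝ)
    (gx : EuclideanSpace ℝ (Fin d) → ℝ → EuclideanSpace ℝ (Fin d))
    (gt : EuclideanSpace ℝ (Fin d) → ℝ → ℝ)
    (m L₁ L₂ : ℝ) (hm : 0 < m) (hmL : m ≤ L₁) (hL₂ : 0 ≤ L₂)
    (hgrad : ∀ (t : ℝ) (x : EuclideanSpace ℝ (Fin d)),
      HasGradientAt (fun y => f y t) (gx x t) x)
    (hgt : ∀ (x : EuclideanSpace ℝ (Fin d)) (t : ℝ),
      HasDerivAt (fun s => f x s) (gt x t) t)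
    (hsc : ∀ (t : ℝ) (x y : EuclideanSpace ℝ (Fin d)),
      m * ‖x - y‖ ^ 2 ≤ (inner ℝ (gx x t - gx y t) (x - y) : ℝ))
    (hlipg : ∀ (t : ℝ) (x y : EuclideanSpace ℝ (Fin d)),
      ‖gx x t - gx y t‖ ≤ L₁ * ‖x - y‖)
    (htx : ∀ (t : ℝ) (x y : EuclideanSpace ℝ (Fin d)),
      |gt x t - gt y t| ≤ L₂ * ‖x - y‖)
    (xstar : ℝ → EuclideanSpace ℝ (Fin d))
    (hstat : ∀ t : ℝ, gx (xstar t) t = 0)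
    (hmin : ∀ (t : ℝ) (x : EuclideanSpace ℝ (Fin d)), f (xstar t) t ≤ f x t) :
    ∀ (x : EuclideanSpace ℝ (Fin d)) (t : ℝ), x ≠ xstar t →
      |gt x t - gt (xstar t) t| ≤ (L₂ / m) * ‖gx x t‖ :=
  stmt_10_general gx gt m L₂ hm hL₂ hsc htx xstar hstat
end

section
/- Let f be L₁-smooth in x, satisfy ‖∇_{tx}f(x;t)‖ ≤ L₂, be G₂-Lipschitz in t, and consider the FOA-Min prediction x_{k+1|k} = x_k − C₁ζh g_k/‖g_k‖ with 0 ≤ C₁ ≤ 1 and ‖g_k − ∇ₓf(x_k;t_k)‖ ≤ L₂h. Then f(x_{k+1|k};t_{k+1}) − f(x_k;t_k) ≤ (C₁L₂ζ + L₁ζ²/2)h² + G₂h. -/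
/-!
Split the change of `f` into a change of time at the predicted point, bounded by `G₂ h`, and a
change of space at time `t_k`, bounded by the descent lemma
`f(x + u) - f(x) ≤ ⟪∇f(x), u⟫ + L₁/2 ‖u‖²` with the step `u = -(C₁ζh/‖g_k‖) g_k` of length at
most `C₁ζh ≤ ζh`. Since `u` points against `g_k`, the first-order term only sees the gradient
error: `⟪∇f(x_k), u⟫ ≤ ‖g_k - ∇f(x_k)‖ ‖u‖ ≤ L₂h · C₁ζh`.
-/

open InnerProductSpace

section Descent

variable {E : Type*} [NormedAddCommGroup E] [InnerProductSpace ℝ E] [CompleteSpace E]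

theorem HasGradientAt.hasDerivAt_add_smul {f : E → ℝ} {f' x u : E} {s : ℝ}
    (hf : HasGradientAt f f' (x + s • u)) :
    HasDerivAt (fun s : ℝ => f (x + s • u)) ⟪f', u⟫_ℝ s := by
  have hline : HasDerivAt (fun s : ℝ => x + s • u) u s := by
    simpa using ((hasDerivAt_id s).smul_const u).const_add x
  simpa [Function.comp_def] using hf.hasFDerivAt.comp_hasDerivAt s hline

theorem sub_le_inner_add_of_lipschitz_gradient {f : E → ℝ} {g : E → E} {L : ℝ}
    (hgrad : ∀ x, HasGradientAt f (g x) x) (hlip : ∀ x y, ‖g x - g y‖ ≤ L * ‖x - y‖)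
    (x u : E) :
    f (x + u) - f x ≤ ⟪g x, u⟫_ℝ + L / 2 * ‖u‖ ^ 2 := by
  -- `φ` has derivative `⟪g (x + s • u) - g x, u⟫ - L s ‖u‖² ≤ 0` on `[0, 1]`.
  set φ : ℝ → ℝ := fun s => f (x + s • u) - (s * ⟪g x, u⟫_ℝ + L / 2 * s ^ 2 * ‖u‖ ^ 2)
  have hφ : ∀ s : ℝ, HasDerivAt φ (⟪g (x + s • u), u⟫_ℝ - (⟪g x, u⟫_ℝ + L * s * ‖u‖ ^ 2)) s := by
    intro s
    have hpoly : HasDerivAt (fun s : ℝ => s * ⟪g x, u⟫_ℝ + L / 2 * s ^ 2 * ‖u‖ ^ 2)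
        (⟪g x, u⟫_ℝ + L * s * ‖u‖ ^ 2) s :=
      (((hasDerivAt_id' s).mul_const _).add
        (((hasDerivAt_pow 2 s).const_mul (L / 2)).mul_const _)).congr_deriv (by push_cast; ring)
    exact (hgrad (x + s • u)).hasDerivAt_add_smul.sub hpoly
  have hderiv_nonpos : ∀ s ∈ interior (Set.Icc (0 : ℝ) 1), deriv φ s ≤ 0 := by
    intro s hs
    rw [interior_Icc] at hs
    have hgap : ⟪g (x + s • u) - g x, u⟫_ℝ ≤ L * s * ‖u‖ ^ 2 :=
      calc ⟪g (x + s • u) - g x, u⟫_ℝ ≤ ‖g (x + s • u) - g x‖ * ‖u‖ := real_inner_le_norm _ _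
        _ ≤ L * ‖(x + s • u) - x‖ * ‖u‖ := by gcongr; exact hlip _ _
        _ = L * s * ‖u‖ ^ 2 := by
          rw [add_sub_cancel_left, norm_smul, Real.norm_of_nonneg hs.1.le]; ring
    rw [(hφ s).deriv]
    rw [inner_sub_left] at hgap
    linarith
  have hanti : AntitoneOn φ (Set.Icc 0 1) :=
    antitoneOn_of_deriv_nonpos (convex_Icc 0 1)
      (fun s _ => (hφ s).continuousAt.continuousWithinAt)
      (fun s _ => (hφ s).differentiableAt.differentiableWithinAt) hderiv_nonpos
  have h10 : φ 1 ≤ φ 0 := hanti (by norm_num) (by norm_num) zero_le_one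
  simp only [φ, one_smul, zero_smul, add_zero] at h10
  linarith

end Descent

theorem norm_smul_div_norm_le {E : Type*} [NormedAddCommGroup E] [NormedSpace ℝ E] {a : ℝ}
    (ha : 0 ≤ a) (w : E) : ‖(a / ‖w‖) • w‖ ≤ a := by
  rcases eq_or_ne w 0 with rfl | hw
  · simpa using ha
  · rw [norm_smul, Real.norm_of_nonneg (by positivity), div_mul_cancel₀ _ (norm_ne_zero_iff.mpr hw)]

theorem inner_neg_smul_le_of_norm_sub_le {E : Type*} [NormedAddCommGroup E]
    [InnerProductSpace ℝ E] {c ε : ℝ} {v w : E} (hc : 0 ≤ c) (hvw : ‖w - v‖ ≤ ε) :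
    ⟪v, -(c • w)⟫_ℝ ≤ ε * ‖c • w‖ := by
  have hsplit : ⟪v, -(c • w)⟫_ℝ = -(c * ‖w‖ ^ 2) + ⟪w - v, c • w⟫_ℝ := by
    rw [inner_sub_left, inner_neg_right, inner_smul_right, inner_smul_right,
      real_inner_self_eq_norm_sq, real_inner_comm]
    ring
  have hcw : 0 ≤ c * ‖w‖ ^ 2 := by positivity
  calc ⟪v, -(c • w)⟫_ℝ ≤ ⟪w - v, c • w⟫_ℝ := by rw [hsplit]; linarith
    _ ≤ ‖w - v‖ * ‖c • w‖ := real_inner_le_norm _ _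
    _ ≤ ε * ‖c • w‖ := by gcongr

theorem stmt_12_general {d : ℕ}
    (f : EuclideanSpace ℝ (Fin d) → ℝ → ℝ)
    (g : EuclideanSpace ℝ (Fin d) → ℝ → EuclideanSpace ℝ (Fin d))
    (L₁ L₂ G₂ h ζ C₁ : ℝ) (hL₁ : 0 < L₁) (hh : 0 < h) (hζ : 0 < ζ)
    (hC₁ : 0 ≤ C₁) (hC₁' : C₁ ≤ 1)
    (hgrad : ∀ (t : ℝ) (x : EuclideanSpace ℝ (Fin d)),
      HasGradientAt (fun y => f y t) (g x t) x)
    (hlipg : ∀ (t : ℝ) (x y : EuclideanSpace ℝ (Fin d)),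
      ‖g x t - g y t‖ ≤ L₁ * ‖x - y‖)
    (hlipt : ∀ (x : EuclideanSpace ℝ (Fin d)) (s t : ℝ),
      |f x s - f x t| ≤ G₂ * |s - t|)
    (xk : EuclideanSpace ℝ (Fin d)) (tk : ℝ)
    (gk : EuclideanSpace ℝ (Fin d))
    (hgkerr : ‖gk - g xk tk‖ ≤ L₂ * h) :
    f (xk - ((C₁ * ζ * h) / ‖gk‖) • gk) (tk + h) - f xk tk ≤
      (C₁ * L₂ * ζ + L₁ * ζ ^ 2 / 2) * h ^ 2 + G₂ * h := by
  rw [sub_eq_add_neg xk]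
  set u := -(((C₁ * ζ * h) / ‖gk‖) • gk)
  have hnorm_u : ‖u‖ ≤ C₁ * ζ * h := by
    rw [norm_neg]; exact norm_smul_div_norm_le (by positivity) gk
  have hL₂h : 0 ≤ L₂ * h := (norm_nonneg _).trans hgkerr
  have htime : f (xk + u) (tk + h) - f (xk + u) tk ≤ G₂ * h := by
    simpa [abs_of_pos hh] using (le_abs_self _).trans (hlipt (xk + u) (tk + h) tk)
  have hfirst : ⟪g xk tk, u⟫_ℝ ≤ L₂ * h * ‖u‖ := by
    simpa only [u, norm_neg] using
      inner_neg_smul_le_of_norm_sub_le (c := C₁ * ζ * h / ‖gk‖) (by positivity) hgkerr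
  have hspace := sub_le_inner_add_of_lipschitz_gradient (hgrad tk) (hlipg tk) xk u
  have hC₁ζh : C₁ * ζ * h ≤ ζ * h := by nlinarith [mul_pos hζ hh]
  calc f (xk + u) (tk + h) - f xk tk
      = (f (xk + u) (tk + h) - f (xk + u) tk) + (f (xk + u) tk - f xk tk) := by ring
    _ ≤ G₂ * h + (L₂ * h * ‖u‖ + L₁ / 2 * ‖u‖ ^ 2) := by gcongr; linarith
    _ ≤ G₂ * h + (L₂ * h * (C₁ * ζ * h) + L₁ / 2 * (ζ * h) ^ 2) := by
      gcongr; exact hnorm_u.trans hC₁ζh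
    _ = (C₁ * L₂ * ζ + L₁ * ζ ^ 2 / 2) * h ^ 2 + G₂ * h := by ring

/-- Lemma 4(a): the FOA-Min/CP prediction satisfies
f(x_{k+1|k};t_{k+1}) − f(x_k;t_k) ≤ (C₁L₂ζ + L₁ζ²/2)h² + G₂h. -/
theorem stmt_12 {d : ℕ}
    (f : EuclideanSpace ℝ (Fin d) → ℝ → ℝ)
    (g : EuclideanSpace ℝ (Fin d) → ℝ → EuclideanSpace ℝ (Fin d))
    (L₁ L₂ G₂ h ζ C₁ : ℝ) (hL₁ : 0 < L₁) (hh : 0 < h) (hζ : 0 < ζ)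
    (hC₁ : 0 ≤ C₁) (hC₁' : C₁ ≤ 1) (hG₂ : 0 ≤ G₂)
    (hgrad : ∀ (t : ℝ) (x : EuclideanSpace ℝ (Fin d)),
      HasGradientAt (fun y => f y t) (g x t) x)
    (hlipg : ∀ (t : ℝ) (x y : EuclideanSpace ℝ (Fin d)),
      ‖g x t - g y t‖ ≤ L₁ * ‖x - y‖)
    (hlipt : ∀ (x : EuclideanSpace ℝ (Fin d)) (s t : ℝ),
      |f x s - f x t| ≤ G₂ * |s - t|)
    (xk : EuclideanSpace ℝ (Fin d)) (tk : ℝ)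
    (gk : EuclideanSpace ℝ (Fin d)) (hgk : gk ≠ 0)
    (hgkerr : ‖gk - g xk tk‖ ≤ L₂ * h) :
    f (xk - ((C₁ * ζ * h) / ‖gk‖) • gk) (tk + h) - f xk tk ≤
      (C₁ * L₂ * ζ + L₁ * ζ ^ 2 / 2) * h ^ 2 + G₂ * h :=
  stmt_12_general f g L₁ L₂ G₂ h ζ C₁ hL₁ hh hζ hC₁ hC₁' hgrad hlipg hlipt xk tk gk hgkerr
end

section
/- Under twice-differentiability of f with the bounds ‖∇ₓₓf‖ ≤ L₁, ‖∇_{tx}f‖ ≤ L₂, |∇_{tt}f| ≤ L₃, and |∇ₜf(x;t)| ≤ Z‖∇ₓf(x;t)‖, let g_k = ∇ₓf_k + h∇̃_{tx}f_k where ∇̃_{tx}f_k := (∇ₓf(x_k;t_k) − ∇ₓf(x_k;t_{k−1}))/h satisfies ‖∇̃_{tx}f_k‖ ≤ L₂. If g_k ≠ 0, ζ ≥ Z, and x_{k+1|k} = x_k − ζh g_k/‖g_k‖, then ⟨∇ₓf_k, x_{k+1|k} − x_k⟩ + h∇ₜf_k ≤ 2h²ζL₂, and hence f(x_{k+1|k};t_{k+1})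 − f(x_k;t_k) = O(h²), explicitly bounded by (2ζL₂ + ζ²L₁/2 + ζL₂ + L₃/2)h². -/
/-!
The step has length `ζh` against the surrogate `g_k`, which lies within `L₂h` of `∇ₓf_k`.
Moving against the normalised `g_k` changes `f` at rate `-‖g_k‖` up to an error `L₂h`, while
`h ∇ₜf_k ≤ hζ‖∇ₓf_k‖ ≤ hζ(‖g_k‖ + L₂h)`; the `‖g_k‖` terms cancel, which gives the first bound.
For the second, split the move into a time step at `x_k` and a space step at `t_{k+1}`, bound each
by the quadratic Taylor estimate that a Lipschitz derivative provides, and pay `L₂h · ζh` for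
using the spatial gradient at `t_k` rather than at `t_{k+1}`.
-/

open Set InnerProductSpace

theorem sub_le_of_hasDerivAt_of_deriv_sub_le {φ φ' : ℝ → ℝ} {L a h : ℝ} (hh : 0 ≤ h)
    (hφ : ∀ s ∈ Icc a (a + h), HasDerivAt φ (φ' s) s)
    (hφ' : ∀ s ∈ Icc a (a + h), φ' s - φ' a ≤ L * (s - a)) :
    φ (a + h) - φ a ≤ h * φ' a + L * h ^ 2 / 2 := by
  set ψ : ℝ → ℝ := fun s => φ' a * s + L * (s - a) ^ 2 / 2 - φ s
  have hψ : ∀ s ∈ Icc a (a + h), HasDerivAt ψ (φ' a + L * (s - a) - φ' s) s := fun s hs => by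
    have hq : HasDerivAt (fun s : ℝ => φ' a * s + L * (s - a) ^ 2 / 2) (φ' a + L * (s - a)) s := by
      refine (((hasDerivAt_id' s).const_mul (φ' a)).add
        ((((hasDerivAt_id' s).sub_const a).pow 2).const_mul L |>.div_const 2)).congr_deriv ?_
      ring
    exact hq.sub (hφ s hs)
  have hmono : MonotoneOn ψ (Icc a (a + h)) :=
    monotoneOn_of_deriv_nonneg (convex_Icc _ _)
      (fun s hs => (hψ s hs).continuousAt.continuousWithinAt)
      (fun s hs => (hψ s (interior_subset hs)).differentiableAt.differentiableWithinAt)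
      (fun s hs => by
        rw [(hψ s (interior_subset hs)).deriv]
        linarith [hφ' s (interior_subset hs)])
  have := hmono (left_mem_Icc.2 (by linarith)) (right_mem_Icc.2 (by linarith)) (by linarith)
  simp only [ψ, sub_self, add_sub_cancel_left] at this
  linarith

theorem sub_le_inner_gradient_add {E : Type*} [NormedAddCommGroup E] [InnerProductSpace ℝ E]
    [CompleteSpace E] {F : E → ℝ} {G : E → E} {L : ℝ} (x v : E)
    (hF : ∀ y, HasGradientAt F (G y) y) (hG : ∀ y, ‖G y - G x‖ ≤ L * ‖y - x‖) :
    F (x + v) - F x ≤ ⟪G x, v⟫_ℝ + L * ‖v‖ ^ 2 / 2 := by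
  have hline : ∀ s : ℝ, HasDerivAt (fun s : ℝ => F (x + s • v)) ⟪G (x + s • v), v⟫_ℝ s := by
    intro s
    have hc : HasDerivAt (fun s : ℝ => x + s • v) v s := by
      simpa using ((hasDerivAt_id s).smul_const v).const_add x
    exact (hF _).hasFDerivAt.comp_hasDerivAt s hc
  have := sub_le_of_hasDerivAt_of_deriv_sub_le (L := L * ‖v‖ ^ 2) zero_le_one
    (fun s _ => hline s) fun s hs => by
      have hs0 : 0 ≤ s := by simpa using hs.1
      calc ⟪G (x + s • v), v⟫_ℝ - ⟪G (x + (0 : ℝ) • v), v⟫_ℝ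
          = ⟪G (x + s • v) - G x, v⟫_ℝ := by rw [zero_smul, add_zero, inner_sub_left]
        _ ≤ ‖G (x + s • v) - G x‖ * ‖v‖ := real_inner_le_norm _ _
        _ ≤ L * (s * ‖v‖) * ‖v‖ := by
          gcongr
          simpa [norm_smul, abs_of_nonneg hs0] using hG (x + s • v)
        _ = L * ‖v‖ ^ 2 * (s - 0) := by ring
  simpa using this

theorem inner_neg_normalized_add_le {E : Type*} [NormedAddCommGroup E] [InnerProductSpace ℝ E]
    {p g : E} {c δ τ : ℝ} (hg : g ≠ 0) (hc : 0 ≤ c) (hpg : ‖p - g‖ ≤ δ) (hτ : τ ≤ c * ‖p‖) :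
    ⟪p, -((c / ‖g‖) • g)⟫_ℝ + τ ≤ 2 * c * δ := by
  have hg' : 0 < ‖g‖ := norm_pos_iff.2 hg
  have hinner : ⟪p, -((c / ‖g‖) • g)⟫_ℝ = -c * ‖g‖ - c * (⟪p - g, g⟫_ℝ / ‖g‖) := by
    rw [inner_neg_right, real_inner_smul_right, inner_sub_left, real_inner_self_eq_norm_sq]
    field_simp
    ring
  have hproj : ⟪p - g, g⟫_ℝ / ‖g‖ ≥ -δ := by
    rw [ge_iff_le, le_div_iff₀ hg']
    nlinarith [neg_le_of_abs_le (abs_real_inner_le_norm (p - g) g)]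
  have hp : ‖p‖ ≤ ‖g‖ + δ := by
    calc ‖p‖ = ‖g + (p - g)‖ := by rw [add_sub_cancel]
      _ ≤ ‖g‖ + δ := (norm_add_le _ _).trans (by linarith)
  rw [hinner]
  nlinarith [mul_le_mul_of_nonneg_left hp hc]

theorem stmt_14_general {d : ℕ}
    (f : EuclideanSpace ℝ (Fin d) → ℝ → ℝ)
    (gx : EuclideanSpace ℝ (Fin d) → ℝ → EuclideanSpace ℝ (Fin d))
    (gt : EuclideanSpace ℝ (Fin d) → ℝ → ℝ)
    (L₁ L₂ L₃ Z ζ h : ℝ) (hh : 0 < h)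
    (hζZ : Z ≤ ζ) (hζ : 0 < ζ)
    (hgrad : ∀ (t : ℝ) (x : EuclideanSpace ℝ (Fin d)),
      HasGradientAt (fun y => f y t) (gx x t) x)
    (hgt : ∀ (x : EuclideanSpace ℝ (Fin d)) (t : ℝ),
      HasDerivAt (fun s => f x s) (gt x t) t)
    (hlipgx : ∀ (x y : EuclideanSpace ℝ (Fin d)) (s t : ℝ),
      ‖gx x s - gx y t‖ ≤ L₁ * ‖x - y‖ + L₂ * |s - t|)
    (hlipgt : ∀ (x y : EuclideanSpace ℝ (Fin d)) (s t : ℝ),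
      |gt x s - gt y t| ≤ L₂ * ‖x - y‖ + L₃ * |s - t|)
    (hZbound : ∀ (x : EuclideanSpace ℝ (Fin d)) (t : ℝ), |gt x t| ≤ Z * ‖gx x t‖)
    (xk : EuclideanSpace ℝ (Fin d)) (tk : ℝ)
    (gk : EuclideanSpace ℝ (Fin d))
    (hgkdef : gk = (2 : ℝ) • gx xk tk - gx xk (tk - h))
    (hfd : ‖gx xk tk - gx xk (tk - h)‖ ≤ L₂ * h)
    (hgk : gk ≠ 0)
    (xpred : EuclideanSpace ℝ (Fin d))
    (hxpred : xpred = xk - ((ζ * h) / ‖gk‖) • gk) :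
    (inner ℝ (gx xk tk) (xpred - xk) : ℝ) + h * gt xk tk ≤ 2 * h ^ 2 * ζ * L₂ ∧
    f xpred (tk + h) - f xk tk ≤
      (2 * ζ * L₂ + ζ ^ 2 * L₁ / 2 + ζ * L₂ + L₃ / 2) * h ^ 2 := by
  set v := xpred - xk
  have hv : v = -(((ζ * h) / ‖gk‖) • gk) := by simp only [v, hxpred, sub_sub_cancel_left]
  have hvnorm : ‖v‖ = ζ * h := by
    rw [hv, norm_neg, norm_smul, Real.norm_of_nonneg (by positivity),
      div_mul_cancel₀ _ (norm_ne_zero_iff.2 hgk)]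
  have hsurrogate : ‖gx xk tk - gk‖ ≤ L₂ * h := by
    rwa [hgkdef, show gx xk tk - ((2 : ℝ) • gx xk tk - gx xk (tk - h))
      = -(gx xk tk - gx xk (tk - h)) by module, norm_neg]
  have htime_deriv : h * gt xk tk ≤ ζ * h * ‖gx xk tk‖ := by
    have hgt_le : gt xk tk ≤ ζ * ‖gx xk tk‖ := (le_abs_self _).trans <|
      (hZbound xk tk).trans (mul_le_mul_of_nonneg_right hζZ (norm_nonneg _))
    nlinarith
  have hfirst : ⟪gx xk tk, v⟫_ℝ + h * gt xk tk ≤ 2 * h ^ 2 * ζ * L₂ := by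
    have := inner_neg_normalized_add_le hgk (by positivity) hsurrogate htime_deriv
    rw [hv]
    linarith
  refine ⟨hfirst, ?_⟩
  have htime : f xk (tk + h) - f xk tk ≤ h * gt xk tk + L₃ * h ^ 2 / 2 :=
    sub_le_of_hasDerivAt_of_deriv_sub_le hh.le (fun s _ => hgt xk s) fun s hs => by
      have := hlipgt xk xk s tk
      rw [sub_self, norm_zero, mul_zero, zero_add, abs_of_nonneg (sub_nonneg.2 hs.1)] at this
      exact (abs_le.1 this).2
  have hspace : f xpred (tk + h) - f xk (tk + h) ≤ ⟪gx xk (tk + h), v⟫_ℝ + L₁ * ‖v‖ ^ 2 / 2 := by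
    have := sub_le_inner_gradient_add (G := fun y => gx y (tk + h)) xk v (hgrad (tk + h))
      fun y => by simpa using hlipgx y xk (tk + h) (tk + h)
    rwa [add_sub_cancel] at this
  have hshift : ⟪gx xk (tk + h), v⟫_ℝ ≤ ⟪gx xk tk, v⟫_ℝ + L₂ * h * ‖v‖ := by
    have hlip : ‖gx xk (tk + h) - gx xk tk‖ ≤ L₂ * h := by
      simpa [abs_of_pos hh] using hlipgx xk xk (tk + h) tk
    have := real_inner_le_norm (gx xk (tk + h) - gx xk tk) v
    rw [inner_sub_left] at this
    nlinarith [norm_nonneg v]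
  rw [hvnorm] at hspace hshift
  linarith

/-- Lemma 4(b), Case 2 (g_k = 2∇ₓf_k − ∇ₓf(x_k;t_{k−1})): the FOA-Min prediction with the
finite-difference direction satisfies ⟨∇ₓf_k, x_{k+1|k} − x_k⟩ + h∇ₜf_k ≤ 2h²ζL₂ and
f(x_{k+1|k};t_{k+1}) − f(x_k;t_k) ≤ (2ζL₂ + ζ²L₁/2 + ζL₂ + L₃/2)h². -/
theorem stmt_14 {d : ℕ}
    (f : EuclideanSpace ℝ (Fin d) → ℝ → ℝ)
    (gx : EuclideanSpace ℝ (Fin d) → ℝ → EuclideanSpace ℝ (Fin d))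
    (gt : EuclideanSpace ℝ (Fin d) → ℝ → ℝ)
    (L₁ L₂ L₃ Z ζ h : ℝ) (hh : 0 < h)
    (hZ : 0 ≤ Z) (hζZ : Z ≤ ζ) (hζ : 0 < ζ)
    (hgrad : ∀ (t : ℝ) (x : EuclideanSpace ℝ (Fin d)),
      HasGradientAt (fun y => f y t) (gx x t) x)
    (hgt : ∀ (x : EuclideanSpace ℝ (Fin d)) (t : ℝ),
      HasDerivAt (fun s => f x s) (gt x t) t)
    (hlipgx : ∀ (x y : EuclideanSpace ℝ (Fin d)) (s t : ℝ),
      ‖gx x s - gx y t‖ ≤ L₁ * ‖x - y‖ + L₂ * |s - t|)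
    (hlipgt : ∀ (x y : EuclideanSpace ℝ (Fin d)) (s t : ℝ),
      |gt x s - gt y t| ≤ L₂ * ‖x - y‖ + L₃ * |s - t|)
    (hZbound : ∀ (x : EuclideanSpace ℝ (Fin d)) (t : ℝ), |gt x t| ≤ Z * ‖gx x t‖)
    (xk : EuclideanSpace ℝ (Fin d)) (tk : ℝ)
    (gk : EuclideanSpace ℝ (Fin d))
    (hgkdef : gk = (2 : ℝ) • gx xk tk - gx xk (tk - h))
    (hfd : ‖gx xk tk - gx xk (tk - h)‖ ≤ L₂ * h)
    (hgk : gk ≠ 0)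
    (xpred : EuclideanSpace ℝ (Fin d))
    (hxpred : xpred = xk - ((ζ * h) / ‖gk‖) • gk) :
    (inner ℝ (gx xk tk) (xpred - xk) : ℝ) + h * gt xk tk ≤ 2 * h ^ 2 * ζ * L₂ ∧
    f xpred (tk + h) - f xk tk ≤
      (2 * ζ * L₂ + ζ ^ 2 * L₁ / 2 + ζ * L₂ + L₃ / 2) * h ^ 2 :=
  stmt_14_general f gx gt L₁ L₂ L₃ Z ζ h hh hζZ hζ hgrad hgt hlipgx hlipgt hZbound xk tk gk hgkdef
    hfd hgk xpred hxpred
end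

section
/- Let f : ℝ^d → ℝ be μ-PL and L₁-smooth with 2μ > L₁. If x⁺ = x − (1/L₁)∇f(x) (one gradient step at time t), the objective is L₂-Lipschitz in the gradient in t (‖∇ₓf(x;s) − ∇ₓf(x;t)‖ ≤ L₂|s−t|), and ‖∇ₓf(x⁺;t+h)‖ > r where r := (1 + √(2(L₁/μ − 1)))/(2 − L₁/μ) · L₂h, then the optimality gap strictly decreases: (f(x;t) − f*(t)) − (f(x⁺;t+h) − f*(t+h)) > L₂²h²/(2(2μ − L₁)). -/
/-!
The gradient step and the descent lemma, combined with the PL inequality at `(x, t)`, bound the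
gradient after the step by the current gap: `‖∇f(x⁺; t)‖² ≤ 2(L₁ - μ)(f(x; t) - f*(t))`.
Moving from `t` to `t + h` changes that gradient by at most `L₂h`, and PL at `(x⁺, t + h)` bounds
the new gap by `‖∇f(x⁺; t + h)‖² / (2μ)`. With `a = ‖∇f(x⁺; t)‖`, `b = L₂h`, `c = L₁ - μ`,
`m = 2μ - L₁`, the decrease beyond `b² / (2m)` is then at least
`((m a - c b)² - 2μc b²) / (2μcm)`, which is positive as soon as `m a > (c + √(2μc)) b`.
Since `‖∇f(x⁺; t + h)‖ ≤ a + b` and `r = (μ + √(2μc)) b / m`, this follows from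
`‖∇f(x⁺; t + h)‖ > r`.
-/

open RealInnerProductSpace

section Descent

variable {E : Type*} [NormedAddCommGroup E] [InnerProductSpace ℝ E] [CompleteSpace E]
  {φ : E → ℝ} {g : E → E} {L : ℝ}

theorem le_add_inner_add_of_gradient_lipschitz (hφ : ∀ x, HasGradientAt φ (g x) x)
    (hg : ∀ x y, ‖g x - g y‖ ≤ L * ‖x - y‖) (x y : E) :
    φ y ≤ φ x + ⟪g x, y - x⟫ + L / 2 * ‖y - x‖ ^ 2 := by
  set v := y - x
  set ψ : ℝ → ℝ := fun s => φ (x + s • v) - s * ⟪g x, v⟫ - L / 2 * s ^ 2 * ‖v‖ ^ 2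
  have hψ (s : ℝ) : HasDerivAt ψ (⟪g (x + s • v) - g x, v⟫ - L * s * ‖v‖ ^ 2) s := by
    have hline : HasDerivAt (fun s : ℝ => x + s • v) v s := by
      simpa using ((hasDerivAt_id s).smul_const v).const_add x
    have hφline : HasDerivAt (fun s : ℝ => φ (x + s • v)) ⟪g (x + s • v), v⟫ s :=
      (hφ _).hasFDerivAt.comp_hasDerivAt s hline
    refine ((hφline.sub ((hasDerivAt_id s).mul_const ⟪g x, v⟫)).sub
      (((hasDerivAt_pow 2 s).const_mul (L / 2)).mul_const (‖v‖ ^ 2))).congr_deriv ?_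
    rw [inner_sub_left]
    push_cast
    ring
  have hψ_anti : AntitoneOn ψ (Set.Icc 0 1) := by
    refine antitoneOn_of_deriv_nonpos (convex_Icc 0 1)
      (fun s _ => (hψ s).continuousAt.continuousWithinAt) (fun s _ => (hψ s).differentiableAt.differentiableWithinAt) fun s hs => ?_
    rw [interior_Icc] at hs
    rw [(hψ s).deriv, sub_nonpos]
    calc ⟪g (x + s • v) - g x, v⟫ ≤ ‖g (x + s • v) - g x‖ * ‖v‖ := real_inner_le_norm _ _
      _ ≤ L * ‖(x + s • v) - x‖ * ‖v‖ := by gcongr; exact hg _ _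
      _ = L * s * ‖v‖ ^ 2 := by
        rw [add_sub_cancel_left, norm_smul, Real.norm_of_nonneg hs.1.le]; ring
  have h01 := hψ_anti (Set.left_mem_Icc.2 zero_le_one) (Set.right_mem_Icc.2 zero_le_one) zero_le_one
  simp only [ψ, one_smul, zero_smul, add_zero, v, add_sub_cancel] at h01
  linarith

theorem le_sub_of_gradient_step (hφ : ∀ x, HasGradientAt φ (g x) x)
    (hg : ∀ x y, ‖g x - g y‖ ≤ L * ‖x - y‖) (x : E) :
    φ (x - (1 / L) • g x) ≤ φ x - ‖g x‖ ^ 2 / (2 * L) := by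
  have key := le_add_inner_add_of_gradient_lipschitz hφ hg x (x - (1 / L) • g x)
  rw [sub_sub_cancel_left, inner_neg_right, real_inner_smul_right, real_inner_self_eq_norm_sq,
    norm_neg, norm_smul, Real.norm_eq_abs, mul_pow, sq_abs] at key
  rcases eq_or_ne L 0 with rfl | hL
  · simp
  · convert key using 1
    field_simp
    ring

theorem sq_norm_gradient_le (hL : 0 < L) (hφ : ∀ x, HasGradientAt φ (g x) x)
    (hg : ∀ x y, ‖g x - g y‖ ≤ L * ‖x - y‖) {m : ℝ} (hm : ∀ y, m ≤ φ y) (x : E) :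
    ‖g x‖ ^ 2 ≤ 2 * L * (φ x - m) := by
  have := (hm _).trans (le_sub_of_gradient_step hφ hg x)
  rw [← div_le_iff₀' (by positivity)]
  linarith

end Descent

theorem sq_div_lt_sub_of_sq_le {μ L a b G Gp : ℝ} (hμ : 0 < μ) (hμL : μ ≤ L) (hL : L < 2 * μ)
    (hb : 0 ≤ b) (hG : a ^ 2 ≤ 2 * (L - μ) * G) (hGp : 2 * μ * Gp ≤ (a + b) ^ 2)
    (hab : (μ + √(2 * μ * (L - μ))) * b < (2 * μ - L) * (a + b)) :
    b ^ 2 / (2 * (2 * μ - L)) < G - Gp := by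
  have hm : 0 < 2 * μ - L := by linarith
  rw [div_lt_iff₀ (by positivity)]
  rcases hμL.eq_or_lt with rfl | hμL
  · have ha : a = 0 := by nlinarith
    simp only [sub_self, mul_zero, Real.sqrt_zero, add_zero, ha, zero_add] at hab
    linarith
  set c := L - μ
  set d := √(2 * μ * c)
  have hc : 0 < c := sub_pos.2 hμL
  have hd : d ^ 2 = 2 * μ * c := Real.sq_sqrt (by positivity)
  have hdb : 0 ≤ d * b := mul_nonneg (Real.sqrt_nonneg _) hb
  -- With `m = 2μ - L`: `μm a² - cm (a + b)² - cμ b² = (m a - c b)² - d² b²`.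
  have hsq : (d * b) ^ 2 < ((2 * μ - L) * a - c * b) ^ 2 := by
    refine pow_lt_pow_left₀ ?_ hdb two_ne_zero
    linarith
  have key : c * μ * b ^ 2 < c * μ * ((G - Gp) * (2 * (2 * μ - L))) := by
    nlinarith [mul_le_mul_of_nonneg_left hG (mul_pos hμ hm).le,
      mul_le_mul_of_nonneg_left hGp (mul_pos hc hm).le]
  exact lt_of_mul_lt_mul_left key (by positivity)

theorem one_add_sqrt_div_two_sub_div {μ L : ℝ} (hμ : 0 < μ) :
    (1 + √(2 * (L / μ - 1))) / (2 - L / μ) = (μ + √(2 * μ * (L - μ))) / (2 * μ - L) := by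
  rw [← mul_div_mul_left _ _ hμ.ne']
  congr 1
  · rw [mul_add, mul_one, ← Real.sqrt_sq hμ.le, ← Real.sqrt_mul (sq_nonneg μ), Real.sqrt_sq hμ.le]
    congr 2
    field_simp
  · field_simp

theorem stmt_18_general {d : ℕ}
    (f : EuclideanSpace ℝ (Fin d) → ℝ → ℝ)
    (g : EuclideanSpace ℝ (Fin d) → ℝ → EuclideanSpace ℝ (Fin d))
    (L₁ L₂ μ h : ℝ) (hμ : 0 < μ) (hμL : μ ≤ L₁) (hL : L₁ < 2 * μ)
    (hL₂ : 0 ≤ L₂) (hh : 0 < h)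
    (hgrad : ∀ (t : ℝ) (x : EuclideanSpace ℝ (Fin d)),
      HasGradientAt (fun y => f y t) (g x t) x)
    (hlipg : ∀ (t : ℝ) (x y : EuclideanSpace ℝ (Fin d)),
      ‖g x t - g y t‖ ≤ L₁ * ‖x - y‖)
    (hliptg : ∀ (x : EuclideanSpace ℝ (Fin d)) (s t : ℝ),
      ‖g x s - g x t‖ ≤ L₂ * |s - t|)
    (fstar : ℝ → ℝ)
    (hopt : ∀ (t : ℝ) (x : EuclideanSpace ℝ (Fin d)), fstar t ≤ f x t)
    (hPL : ∀ (x : EuclideanSpace ℝ (Fin d)) (t : ℝ),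
      μ * (f x t - fstar t) ≤ (1 / 2) * ‖g x t‖ ^ 2)
    (x : EuclideanSpace ℝ (Fin d)) (t : ℝ)
    (xplus : EuclideanSpace ℝ (Fin d))
    (hstep : xplus = x - (1 / L₁) • g x t)
    (hbig : (1 + Real.sqrt (2 * (L₁ / μ - 1))) / (2 - L₁ / μ) * (L₂ * h) <
      ‖g xplus (t + h)‖) :
    L₂ ^ 2 * h ^ 2 / (2 * (2 * μ - L₁)) <
      (f x t - fstar t) - (f xplus (t + h) - fstar (t + h)) := by
  have hL₁ : 0 < L₁ := hμ.trans_le hμL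
  have hdesc : 2 * L₁ * f xplus t ≤ 2 * L₁ * f x t - ‖g x t‖ ^ 2 := by
    have := mul_le_mul_of_nonneg_left (hstep ▸ le_sub_of_gradient_step (hgrad t) (hlipg t) x)
      (by positivity : 0 ≤ 2 * L₁)
    rwa [mul_sub, mul_div_cancel₀ _ (by positivity)] at this
  have hG : ‖g xplus t‖ ^ 2 ≤ 2 * (L₁ - μ) * (f x t - fstar t) := by
    linarith [sq_norm_gradient_le hL₁ (hgrad t) (hlipg t) (hopt t) xplus, hPL x t]
  have hdrift : ‖g xplus (t + h)‖ ≤ ‖g xplus t‖ + L₂ * h := by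
    calc ‖g xplus (t + h)‖ ≤ ‖g xplus t‖ + ‖g xplus (t + h) - g xplus t‖ :=
          norm_le_norm_add_norm_sub' _ _
      _ ≤ ‖g xplus t‖ + L₂ * |t + h - t| := by gcongr; exact hliptg _ _ _
      _ = ‖g xplus t‖ + L₂ * h := by rw [add_sub_cancel_left, abs_of_pos hh]
  have hGp : 2 * μ * (f xplus (t + h) - fstar (t + h)) ≤ (‖g xplus t‖ + L₂ * h) ^ 2 := by
    linarith [hPL xplus (t + h), pow_le_pow_left₀ (norm_nonneg _) hdrift 2]
  rw [one_add_sqrt_div_two_sub_div hμ, div_mul_eq_mul_div, div_lt_iff₀ (by linarith)] at hbig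
  have hab := hbig.trans_le (mul_le_mul_of_nonneg_right hdrift (by linarith))
  rw [← mul_pow]
  exact sq_div_lt_sub_of_sq_le hμ hμL hL (by positivity) hG hGp (hab.trans_eq (mul_comm _ _))

/-- Key inequality of Theorem 7: for a μ-PL, L₁-smooth objective with 2μ > L₁ and
L₂-Lipschitz gradient in time, if the post-step gradient norm exceeds
r = (1 + √(2(L₁/μ − 1)))/(2 − L₁/μ)·L₂h, the optimality gap strictly decreases by more than
L₂²h²/(2(2μ − L₁)). -/
theorem stmt_18 {d : ℕ}
    (f : EuclideanSpace ℝ (Fin d) → ℝ → ℝ)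
    (g : EuclideanSpace ℝ (Fin d) → ℝ → EuclideanSpace ℝ (Fin d))
    (L₁ L₂ μ h : ℝ) (hμ : 0 < μ) (hμL : μ ≤ L₁) (hL : L₁ < 2 * μ)
    (hL₂ : 0 ≤ L₂) (hh : 0 < h)
    (hgrad : ∀ (t : ℝ) (x : EuclideanSpace ℝ (Fin d)),
      HasGradientAt (fun y => f y t) (g x t) x)
    (hlipg : ∀ (t : ℝ) (x y : EuclideanSpace ℝ (Fin d)),
      ‖g x t - g y t‖ ≤ L₁ * ‖x - y‖)
    (hliptg : ∀ (x : EuclideanSpace ℝ (Fin d)) (s t : ℝ),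
      ‖g x s - g x t‖ ≤ L₂ * |s - t|)
    (fstar : ℝ → ℝ)
    (hopt : ∀ (t : ℝ) (x : EuclideanSpace ℝ (Fin d)), fstar t ≤ f x t)
    (hattained : ∀ t : ℝ, ∃ x, f x t = fstar t)
    (hPL : ∀ (x : EuclideanSpace ℝ (Fin d)) (t : ℝ),
      μ * (f x t - fstar t) ≤ (1 / 2) * ‖g x t‖ ^ 2)
    (x : EuclideanSpace ℝ (Fin d)) (t : ℝ)
    (xplus : EuclideanSpace ℝ (Fin d))
    (hstep : xplus = x - (1 / L₁) • g x t)
    (hbig : (1 + Real.sqrt (2 * (L₁ / μ - 1))) / (2 - L₁ / μ) * (L₂ * h) <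
      ‖g xplus (t + h)‖) :
    L₂ ^ 2 * h ^ 2 / (2 * (2 * μ - L₁)) <
      (f x t - fstar t) - (f xplus (t + h) - fstar (t + h)) :=
  stmt_18_general f g L₁ L₂ μ h hμ hμL hL hL₂ hh hgrad hlipg hliptg fstar hopt hPL x t xplus hstep
    hbig
end

section
/- Let A(t) ∈ ℝ^{m×d} be a differentiable time-varying full-row-rank matrix with minimum singular value σ_min(t) > 0 and ‖A'(t)‖ ≤ G_A, and let b(t) ∈ ℝ^m be differentiable with ‖b'(t)‖ ≤ G_B. For a differentiable f₁ : ℝ^m → ℝ, define f(x;t) = f₁(A(t)x + b(t)). Then for all x with ‖x‖ ≤ R and ∇ₓf(x;t) ≠ 0, |∇ₜf(x;t)| / ‖∇ₓf(x;t)‖ ≤ (G_A R + G_B)/σ_min(t). -/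
/-!
Cauchy–Schwarz bounds `|⟪g, A' x + b'⟫|` by `‖g‖ (G_A R + G_B)`, while the singular-value bound
gives `‖Aᵀ g‖ ≥ σ_min ‖g‖`; dividing, the factor `‖g‖` cancels.
-/

open scoped RealInnerProductSpace

theorem norm_apply_add_le_mul_add {E F : Type*} [SeminormedAddCommGroup E]
    [SeminormedAddCommGroup F] [NormedSpace ℝ E] [NormedSpace ℝ F]
    (L : E →L[ℝ] F) {x : E} {v : F} {a R c : ℝ}
    (hL : ‖L‖ ≤ a) (hx : ‖x‖ ≤ R) (hv : ‖v‖ ≤ c) :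
    ‖L x + v‖ ≤ a * R + c :=
  calc ‖L x + v‖ ≤ ‖L‖ * ‖x‖ + ‖v‖ := (norm_add_le _ _).trans (by gcongr; exact L.le_opNorm x)
    _ ≤ a * R + c := by
      gcongr
      exact (norm_nonneg L).trans hL

theorem abs_inner_div_le_norm_div {F : Type*} [NormedAddCommGroup F] [InnerProductSpace ℝ F]
    {w v : F} {u σ : ℝ} (hσ : 0 < σ) (hu : 0 < u) (hwu : σ * ‖w‖ ≤ u) :
    |⟪w, v⟫| / u ≤ ‖v‖ / σ := by
  rw [div_le_div_iff₀ hu hσ]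
  calc |⟪w, v⟫| * σ ≤ ‖w‖ * ‖v‖ * σ := by gcongr; exact abs_real_inner_le_norm w v
    _ = ‖v‖ * (σ * ‖w‖) := by ring
    _ ≤ ‖v‖ * u := by gcongr

theorem stmt_19_general {d m : ℕ}
    (A A' : ℝ → (EuclideanSpace ℝ (Fin d) →L[ℝ] EuclideanSpace ℝ (Fin m)))
    (b b' : ℝ → EuclideanSpace ℝ (Fin m))
    (GA GB R : ℝ) (hGA : ∀ t : ℝ, ‖A' t‖ ≤ GA)
    (hGB : ∀ t : ℝ, ‖b' t‖ ≤ GB)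
    (g₁ : EuclideanSpace ℝ (Fin m) → EuclideanSpace ℝ (Fin m))
    (σmin : ℝ → ℝ) (hσpos : ∀ t : ℝ, 0 < σmin t)
    (hσ : ∀ (t : ℝ) (w : EuclideanSpace ℝ (Fin m)),
      σmin t * ‖w‖ ≤ ‖ContinuousLinearMap.adjoint (A t) w‖) :
    ∀ (x : EuclideanSpace ℝ (Fin d)) (t : ℝ), ‖x‖ ≤ R →
      ContinuousLinearMap.adjoint (A t) (g₁ (A t x + b t)) ≠ 0 →
      |(inner ℝ (g₁ (A t x + b t)) (A' t x + b' t) : ℝ)| /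
          ‖ContinuousLinearMap.adjoint (A t) (g₁ (A t x + b t))‖ ≤
        (GA * R + GB) / σmin t := by
  intro x t hx hne
  calc _ ≤ ‖A' t x + b' t‖ / σmin t :=
        abs_inner_div_le_norm_div (hσpos t) (norm_pos_iff.mpr hne) (hσ t _)
    _ ≤ (GA * R + GB) / σmin t :=
      div_le_div_of_nonneg_right (norm_apply_add_le_mul_add (A' t) (hGA t) hx (hGB t))
        (hσpos t).le

/-- Corollary 1: for f(x;t) = f₁(A(t)x + b(t)) with ‖A'(t)‖ ≤ G_A, ‖b'(t)‖ ≤ G_B and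
minimum singular value σ_min(t) of the full-row-rank A(t), one has, for ‖x‖ ≤ R,
|∇ₜf(x;t)| / ‖∇ₓf(x;t)‖ ≤ (G_A R + G_B)/σ_min(t). -/
theorem stmt_19 {d m : ℕ}
    (A A' : ℝ → (EuclideanSpace ℝ (Fin d) →L[ℝ] EuclideanSpace ℝ (Fin m)))
    (b b' : ℝ → EuclideanSpace ℝ (Fin m))
    (GA GB R : ℝ) (hR : 0 < R)
    (hA : ∀ t : ℝ, HasDerivAt A (A' t) t) (hGA : ∀ t : ℝ, ‖A' t‖ ≤ GA)
    (hb : ∀ t : ℝ, HasDerivAt b (b' t) t) (hGB : ∀ t : ℝ, ‖b' t‖ ≤ GB)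
    (f₁ : EuclideanSpace ℝ (Fin m) → ℝ)
    (g₁ : EuclideanSpace ℝ (Fin m) → EuclideanSpace ℝ (Fin m))
    (hg₁ : ∀ y, HasGradientAt f₁ (g₁ y) y)
    (σmin : ℝ → ℝ) (hσpos : ∀ t : ℝ, 0 < σmin t)
    (hσ : ∀ (t : ℝ) (w : EuclideanSpace ℝ (Fin m)),
      σmin t * ‖w‖ ≤ ‖ContinuousLinearMap.adjoint (A t) w‖) :
    ∀ (x : EuclideanSpace ℝ (Fin d)) (t : ℝ), ‖x‖ ≤ R →
      ContinuousLinearMap.adjoint (A t) (g₁ (A t x + b t)) ≠ 0 →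
      |(inner ℝ (g₁ (A t x + b t)) (A' t x + b' t) : ℝ)| /
          ‖ContinuousLinearMap.adjoint (A t) (g₁ (A t x + b t))‖ ≤
        (GA * R + GB) / σmin t :=
  stmt_19_general A A' b b' GA GB R hGA hGB g₁ σmin hσpos hσ
end
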